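/- arXiv:2102.07967 — 9 statements merged into one kernel-verified Lean document; each statement's English description precedes it below -/
import Mathlib

section
/- Let α ∈ (0,1), q ∈ (0,1), r, s ≥ 0 with r + s = α, let d ≥ 1, n₁, n₂ ≥ 1 and n = n₁ + n₂. Let P be a probability distribution on ℝ^d × ℝ and (X₁,Y₁),…,(X_{n+1},Y_{n+1}) i.i.d. with law P. Let f^lo and f^hi be functions ℝ^d × ℝ → ℝ, each measurable and nondecreasing in the second argument, obtained as functions of the first n₁ datapoints only. For n₁ < i ≤ n set E_i^lo = f^lo(X_i, Y_i) and E_i^hi = f^hi(X_i, Y_i). Let Q^lo be the ⌈rq(n₂+1)−1⌉-th smallest value of {E_i^lo : n₁ < i ≤ n} (−∞ if ⌈rq(n₂+1)−1⌉ ≤ 0) and Q^hi the ⌈(1−s(1−q))(n₂+1)⌉-th smallest value of {E_i^hi : n₁ < i ≤ n} (+∞ if ⌈(1−s(1−q))(n₂+1)⌉ > n₂). Assume the coverage event below is measurable. Then for every conditional q-quantile function g of P, ℙ( Q^lo ≤ f^lo(X_{n+1}, g(X_{n+1})) and f^hi(X_{n+1}, g(X_{n+1})) ≤ Q^hi ) ≥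 1 − α. -/
open MeasureTheory ProbabilityTheory
open scoped ENNReal NNReal

/-- The `k`-th smallest value (1-indexed) of the multiset `{E i : i}`, as an extended real:
`⊥` if `k ≤ 0` and `⊤` if `k > N`. -/
noncomputable def kthSmallest {N : ℕ} (E : Fin N → ℝ) (k : ℤ) : EReal :=
  if k ≤ 0 then ⊥
  else if (N : ℤ) < k then ⊤
  else (((Multiset.map E Finset.univ.val).sort (· ≤ ·)).getD (k.toNat - 1) 0 : ℝ)

/-- `m` is a conditional median function for `P`. -/
def IsCondMedian {d : ℕ} (P : Measure ((Fin d → ℝ) × ℝ)) [IsFiniteMeasure P]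
    (m : (Fin d → ℝ) → ℝ) : Prop :=
  Measurable m ∧
    ∀ᵐ x ∂P.fst, (1 : ℝ≥0∞) / 2 ≤ P.condKernel x (Set.Iic (m x)) ∧
      (1 : ℝ≥0∞) / 2 ≤ P.condKernel x (Set.Ici (m x))

/-- `g` is a conditional `q`-quantile function for `P`. -/
def IsCondQuantile {d : ℕ} (q : ℝ) (P : Measure ((Fin d → ℝ) × ℝ)) [IsFiniteMeasure P]
    (g : (Fin d → ℝ) → ℝ) : Prop :=
  Measurable g ∧
    ∀ᵐ x ∂P.fst, ENNReal.ofReal q ≤ P.condKernel x (Set.Iic (g x)) ∧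
      ENNReal.ofReal (1 - q) ≤ P.condKernel x (Set.Ici (g x))

/-- The event that the general split conformal interval of Algorithm 2 covers the value
`g(X_{n+1})` of a conditional `q`-quantile function.  Datapoints are indexed by
`Fin (n₁ + n₂ + 1)`: the first `n₁` are the training set, the next `n₂` the calibration
set, and the last one is the test point. -/
def quantileCoverageEvent {d n₁ n₂ : ℕ} (q r s : ℝ)
    (Flo Fhi : (Fin n₁ → ((Fin d → ℝ) × ℝ)) → ((Fin d → ℝ) × ℝ) → ℝ)
    (g : (Fin d → ℝ) → ℝ) :
    Set (Fin (n₁ + n₂ + 1) → ((Fin d → ℝ) × ℝ)) :=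
  {ω |
    let data : Fin n₁ → ((Fin d → ℝ) × ℝ) := fun i => ω (Fin.castLE (by omega) i)
    let Qlo : EReal := kthSmallest
      (fun j : Fin n₂ => Flo data (ω ⟨n₁ + j.1, by have := j.2; omega⟩))
      ⌈r * q * ((n₂ : ℝ) + 1) - 1⌉
    let Qhi : EReal := kthSmallest
      (fun j : Fin n₂ => Fhi data (ω ⟨n₁ + j.1, by have := j.2; omega⟩))
      ⌈(1 - s * (1 - q)) * ((n₂ : ℝ) + 1)⌉
    Qlo ≤ (Flo data ((ω (Fin.last (n₁ + n₂))).1, g (ω (Fin.last (n₁ + n₂))).1) : EReal) ∧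
      (Fhi data ((ω (Fin.last (n₁ + n₂))).1, g (ω (Fin.last (n₁ + n₂))).1) : EReal) ≤ Qhi}


open Finset

lemma sorted_getElem_mono {l : List ℝ} (hl : l.Pairwise (· ≤ ·)) {i j : ℕ} (hj : j < l.length)
    (hij : i ≤ j) : l[i]'(lt_of_le_of_lt hij hj) ≤ l[j] := by
  rcases eq_or_lt_of_le hij with rfl | h
  · exact le_refl _
  · exact List.pairwise_iff_getElem.mp hl i j _ hj h

lemma listA (l : List ℝ) (hl : l.Pairwise (· ≤ ·)) (k : ℕ) (hk1 : 1 ≤ k) (hk2 : k ≤ l.length)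
    (a : ℝ) : a < l.getD (k-1) 0 ↔ l.countP (fun x => decide (x ≤ a)) < k := by
  have hlt : k - 1 < l.length := by omega
  rw [List.getD_eq_getElem l 0 hlt]
  constructor
  · intro h
    have hcnt : l.countP (fun x => decide (x ≤ a)) =
        (l.take (k-1)).countP (fun x => decide (x ≤ a)) +
        (l.drop (k-1)).countP (fun x => decide (x ≤ a)) := by
      conv_lhs => rw [← List.take_append_drop (k-1) l]
      rw [List.countP_append]
    have hdrop : (l.drop (k-1)).countP (fun x => decide (x ≤ a)) = 0 := by
      rw [List.countP_eq_zero]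
      intro x hx
      simp only [decide_eq_true_eq]
      rw [List.mem_iff_getElem] at hx
      obtain ⟨i, hi, rfl⟩ := hx
      have hi2 : i < l.length - (k-1) := by simpa [List.length_drop] using hi
      have hi' : k - 1 + i < l.length := by omega
      rw [List.getElem_drop]
      have h2 : l[k-1] ≤ l[k-1+i] := sorted_getElem_mono hl hi' (by omega)
      simp only [not_le]; linarith
    have htake : (l.take (k-1)).countP (fun x => decide (x ≤ a)) ≤ k - 1 := by
      calc _ ≤ (l.take (k-1)).length := List.countP_le_length
        _ ≤ k - 1 := by simp [List.length_take]
    omega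
  · intro h
    by_contra hc
    push_neg at hc
    have : k ≤ l.countP (fun x => decide (x ≤ a)) := by
      calc k = (l.take k).length := by simp [List.length_take]; omega
        _ = (l.take k).countP (fun x => decide (x ≤ a)) := by
            rw [eq_comm, List.countP_eq_length]
            intro x hx
            rw [List.mem_iff_getElem] at hx
            obtain ⟨i, hi, rfl⟩ := hx
            have hik : i < k := by rw [List.length_take] at hi; omega
            rw [List.getElem_take]
            simp only [decide_eq_true_eq]
            have h2 : l[i]'(by omega) ≤ l[k-1] := sorted_getElem_mono hl hlt (by omega)
            linarith
        _ ≤ l.countP (fun x => decide (x ≤ a)) := by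
            conv_rhs => rw [← List.take_append_drop k l, List.countP_append]
            omega
    omega

lemma listB (l : List ℝ) (hl : l.Pairwise (· ≤ ·)) (k : ℕ) (hk1 : 1 ≤ k) (hk2 : k ≤ l.length)
    (a : ℝ) : l.getD (k-1) 0 < a ↔ k ≤ l.countP (fun x => decide (x < a)) := by
  have hlt : k - 1 < l.length := by omega
  rw [List.getD_eq_getElem l 0 hlt]
  constructor
  · intro h
    calc k = (l.take k).length := by simp [List.length_take]; omega
      _ = (l.take k).countP (fun x => decide (x < a)) := by
          rw [eq_comm, List.countP_eq_length]
          intro x hx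
          rw [List.mem_iff_getElem] at hx
          obtain ⟨i, hi, rfl⟩ := hx
          have hik : i < k := by rw [List.length_take] at hi; omega
          rw [List.getElem_take]
          simp only [decide_eq_true_eq]
          have h2 : l[i]'(by omega) ≤ l[k-1] := sorted_getElem_mono hl hlt (by omega)
          linarith
      _ ≤ l.countP (fun x => decide (x < a)) := by
          conv_rhs => rw [← List.take_append_drop k l, List.countP_append]
          omega
  · intro h
    by_contra hc
    push_neg at hc
    have hcnt : l.countP (fun x => decide (x < a)) =
        (l.take (k-1)).countP (fun x => decide (x < a)) +
        (l.drop (k-1)).countP (fun x => decide (x < a)) := by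
      conv_lhs => rw [← List.take_append_drop (k-1) l]
      rw [List.countP_append]
    have hdrop : (l.drop (k-1)).countP (fun x => decide (x < a)) = 0 := by
      rw [List.countP_eq_zero]
      intro x hx
      simp only [decide_eq_true_eq]
      rw [List.mem_iff_getElem] at hx
      obtain ⟨i, hi, rfl⟩ := hx
      have hi2 : i < l.length - (k-1) := by simpa [List.length_drop] using hi
      have hi' : k - 1 + i < l.length := by omega
      rw [List.getElem_drop]
      have h2 : l[k-1] ≤ l[k-1+i] := sorted_getElem_mono hl hi' (by omega)
      simp only [not_lt]; linarith
    have htake : (l.take (k-1)).countP (fun x => decide (x < a)) ≤ k - 1 := by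
      calc _ ≤ (l.take (k-1)).length := List.countP_le_length
        _ ≤ k - 1 := by simp [List.length_take]
    omega

lemma filter_card_eq_countP_sort (N : ℕ) (E : Fin N → ℝ) (p : ℝ → Prop) [DecidablePred p] :
    (Finset.univ.filter fun i => p (E i)).card
      = ((Multiset.map E Finset.univ.val).sort (· ≤ ·)).countP (fun x => decide (p x)) := by
  rw [← Multiset.coe_countP, Multiset.sort_eq, Multiset.countP_map]
  rw [Finset.card, Finset.filter_val]

lemma lt_kthSmallest_iff {N : ℕ} (E : Fin N → ℝ) {k : ℤ} (hk1 : 1 ≤ k) (hk2 : k ≤ (N : ℤ))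
    (a : ℝ) : (a : EReal) < kthSmallest E k ↔
      (Finset.univ.filter fun i => E i ≤ a).card < k.toNat := by
  rw [kthSmallest, if_neg (by omega), if_neg (by omega), EReal.coe_lt_coe_iff]
  have hlen : ((Multiset.map E Finset.univ.val).sort (· ≤ ·)).length = N := by
    rw [Multiset.length_sort, Multiset.card_map]; simp
  rw [listA _ (Multiset.pairwise_sort _ _) k.toNat (by omega) (by rw [hlen]; omega) a]
  rw [← filter_card_eq_countP_sort N E (fun x => x ≤ a)]

lemma kthSmallest_lt_iff {N : ℕ} (E : Fin N → ℝ) {k : ℤ} (hk1 : 1 ≤ k) (hk2 : k ≤ (N : ℤ))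
    (a : ℝ) : kthSmallest E k < (a : EReal) ↔
      k.toNat ≤ (Finset.univ.filter fun i => E i < a).card := by
  rw [kthSmallest, if_neg (by omega), if_neg (by omega), EReal.coe_lt_coe_iff]
  have hlen : ((Multiset.map E Finset.univ.val).sort (· ≤ ·)).length = N := by
    rw [Multiset.length_sort, Multiset.card_map]; simp
  rw [listB _ (Multiset.pairwise_sort _ _) k.toNat (by omega) (by rw [hlen]; omega) a]
  rw [← filter_card_eq_countP_sort N E (fun x => x < a)]

lemma card_lowRank_le {M : ℕ} (E : Fin (M+1) → ℝ) (k : ℕ) :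
    (Finset.univ.filter fun j =>
      ((Finset.univ.erase j).filter fun i => E i ≤ E j).card < k).card ≤ k := by
  classical
  set S := Finset.univ.filter fun j : Fin (M+1) =>
      ((Finset.univ.erase j).filter fun i => E i ≤ E j).card < k with hS
  rcases S.eq_empty_or_nonempty with h | h
  · simp [← hS, h]
  obtain ⟨j₀, hj₀, hmax⟩ := S.exists_max_image E h
  have h1 : ((Finset.univ.erase j₀).filter fun i => E i ≤ E j₀).card < k := by
    simpa [hS] using (Finset.mem_filter.mp hj₀).2
  have h2 : S.erase j₀ ⊆ (Finset.univ.erase j₀).filter fun i => E i ≤ E j₀ := by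
    intro j hj
    rcases Finset.mem_erase.mp hj with ⟨hne, hjS⟩
    exact Finset.mem_filter.mpr ⟨Finset.mem_erase.mpr ⟨hne, Finset.mem_univ _⟩, hmax j hjS⟩
  have h3 := Finset.card_le_card h2
  have h4 : (S.erase j₀).card = S.card - 1 := Finset.card_erase_of_mem hj₀
  have h5 : 1 ≤ S.card := Finset.card_pos.mpr h
  omega

lemma card_highRank_le {M : ℕ} (E : Fin (M+1) → ℝ) (k : ℕ) :
    (Finset.univ.filter fun j =>
      k ≤ ((Finset.univ.erase j).filter fun i => E i < E j).card).card ≤ M + 1 - k := by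
  have key : ∀ j : Fin (M+1),
      (k ≤ ((Finset.univ.erase j).filter fun i => E i < E j).card) ↔
      ((Finset.univ.erase j).filter fun i => (-E) i ≤ (-E) j).card < M + 1 - k := by
    intro j
    have hcard : (Finset.univ.erase j).card = M := by
      rw [Finset.card_erase_of_mem (Finset.mem_univ _)]; simp
    have hneg : ((Finset.univ.erase j).filter fun i => ¬ (E i < E j))
        = ((Finset.univ.erase j).filter fun i => (-E) i ≤ (-E) j) := by
      apply Finset.filter_congr
      intro i _
      simp [not_lt]
    have hsplit := Finset.card_filter_add_card_filter_not
      (p := fun i => E i < E j) (s := Finset.univ.erase j)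
    rw [hneg, hcard] at hsplit
    have hle : ((Finset.univ.erase j).filter fun i => E i < E j).card ≤ M := by
      calc _ ≤ (Finset.univ.erase j).card := Finset.card_filter_le _ _
        _ = M := hcard
    omega
  have : (Finset.univ.filter fun j =>
      k ≤ ((Finset.univ.erase j).filter fun i => E i < E j).card)
      = (Finset.univ.filter fun j =>
      ((Finset.univ.erase j).filter fun i => (-E) i ≤ (-E) j).card < M + 1 - k) := by
    apply Finset.filter_congr
    intro j _
    exact key j
  rw [this]
  exact card_lowRank_le (-E) (M + 1 - k)

lemma exch_bound {Z : Type*} [MeasurableSpace Z] (P : Measure Z) [IsProbabilityMeasure P]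
    (f : Z → ℝ) (hf : Measurable f) (M k : ℕ) :
    (Measure.pi fun _ : Fin (M+1) => P)
      {c | ((Finset.univ.erase (Fin.last M)).filter
          fun i => f (c i) ≤ f (c (Fin.last M))).card < k}
      ≤ (k : ℝ≥0∞) / (M+1) := by
  classical
  set ν := Measure.pi fun _ : Fin (M+1) => P with hν
  set C : Fin (M+1) → Set (Fin (M+1) → Z) := fun j =>
    {c | ((Finset.univ.erase j).filter fun i => f (c i) ≤ f (c j)).card < k} with hC
  have hFmeas : ∀ j : Fin (M+1), Measurable fun c : Fin (M+1) → Z =>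
      ((Finset.univ.erase j).filter fun i => f (c i) ≤ f (c j)).card := by
    intro j
    have : (fun c : Fin (M+1) → Z =>
        ((Finset.univ.erase j).filter fun i => f (c i) ≤ f (c j)).card)
        = fun c => ∑ i ∈ Finset.univ.erase j, if f (c i) ≤ f (c j) then 1 else 0 := by
      funext c; rw [Finset.card_filter]
    rw [this]
    apply Finset.measurable_sum
    intro i _
    apply Measurable.ite _ measurable_const measurable_const
    exact measurableSet_le (hf.comp (measurable_pi_apply i)) (hf.comp (measurable_pi_apply j))
  have hCmeas : ∀ j, MeasurableSet (C j) := by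
    intro j
    have : C j = (fun c : Fin (M+1) → Z =>
        ((Finset.univ.erase j).filter fun i => f (c i) ≤ f (c j)).card) ⁻¹' (Set.Iio k) := rfl
    rw [this]
    exact hFmeas j (by trivial)
  have hswap : ∀ j, ν (C j) = ν (C (Fin.last M)) := by
    intro j
    set τ : Fin (M+1) ≃ Fin (M+1) := Equiv.swap j (Fin.last M) with hτ
    have hmp := measurePreserving_piCongrLeft (fun _ : Fin (M+1) => P) τ
    have happ : ∀ (c : Fin (M+1) → Z) (b : Fin (M+1)),
        (MeasurableEquiv.piCongrLeft (fun _ => Z) τ) c b = c (τ b) := by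
      intro c b
      conv_lhs => rw [show b = τ (τ.symm b) from (Equiv.apply_symm_apply τ b).symm]
      rw [MeasurableEquiv.coe_piCongrLeft]
      rw [Equiv.piCongrLeft_apply_apply]
      rw [show τ.symm = τ from Equiv.symm_swap _ _]
    have hpre : C j = (MeasurableEquiv.piCongrLeft (fun _ => Z) τ) ⁻¹' (C (Fin.last M)) := by
      ext c
      simp only [Set.mem_preimage, hC, Set.mem_setOf_eq, happ]
      rw [Equiv.swap_apply_right]
      constructor <;> intro h <;> [skip; skip]
      · refine lt_of_eq_of_lt ?_ h
        apply Finset.card_bij' (i := fun i _ => τ i) (j := fun i _ => τ i)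
        · intro a ha
          simp only [Finset.mem_filter, Finset.mem_erase] at ha ⊢
          refine ⟨⟨?_, Finset.mem_univ _⟩, ha.2⟩
          intro hcon
          rw [hτ] at hcon
          rw [Equiv.swap_apply_eq_iff, Equiv.swap_apply_left] at hcon
          exact ha.1.1 hcon
        · intro a ha
          simp only [Finset.mem_filter, Finset.mem_erase] at ha ⊢
          refine ⟨⟨?_, Finset.mem_univ _⟩, ?_⟩
          · intro hcon
            rw [hτ, Equiv.swap_apply_eq_iff, Equiv.swap_apply_right] at hcon
            exact ha.1.1 hcon
          · rw [hτ, Equiv.swap_apply_self]; exact ha.2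
        · intro a _; rw [hτ, Equiv.swap_apply_self]
        · intro a _; rw [hτ, Equiv.swap_apply_self]
      · refine lt_of_eq_of_lt ?_ h
        apply Finset.card_bij' (i := fun i _ => τ i) (j := fun i _ => τ i)
        · intro a ha
          simp only [Finset.mem_filter, Finset.mem_erase] at ha ⊢
          refine ⟨⟨?_, Finset.mem_univ _⟩, ?_⟩
          · intro hcon
            rw [hτ, Equiv.swap_apply_eq_iff, Equiv.swap_apply_right] at hcon
            exact ha.1.1 hcon
          · rw [hτ, Equiv.swap_apply_self]; exact ha.2
        · intro a ha
          simp only [Finset.mem_filter, Finset.mem_erase] at ha ⊢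
          refine ⟨⟨?_, Finset.mem_univ _⟩, ha.2⟩
          intro hcon
          rw [hτ, Equiv.swap_apply_eq_iff, Equiv.swap_apply_left] at hcon
          exact ha.1.1 hcon
        · intro a _; rw [hτ, Equiv.swap_apply_self]
        · intro a _; rw [hτ, Equiv.swap_apply_self]
    rw [hpre]
    exact hmp.measure_preimage (hCmeas (Fin.last M)).nullMeasurableSet
  have hsum : (M + 1 : ℝ≥0∞) * ν (C (Fin.last M)) ≤ k := by
    have h1 : ∑ j : Fin (M+1), ν (C j) = (M + 1 : ℝ≥0∞) * ν (C (Fin.last M)) := by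
      rw [Finset.sum_congr rfl (fun j _ => hswap j), Finset.sum_const, Finset.card_univ,
        Fintype.card_fin, nsmul_eq_mul]
      push_cast
      ring
    have h2 : ∑ j : Fin (M+1), ν (C j)
        = ∫⁻ c, ∑ j : Fin (M+1), (C j).indicator (fun _ => (1:ℝ≥0∞)) c ∂ν := by
      rw [lintegral_finset_sum]
      · congr 1
        funext j
        rw [lintegral_indicator_const (hCmeas j), one_mul]
      · exact fun j _ => measurable_const.indicator (hCmeas j)
    have h3 : ∀ c, ∑ j : Fin (M+1), (C j).indicator (fun _ => (1:ℝ≥0∞)) c ≤ k := by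
      intro c
      have : ∑ j : Fin (M+1), (C j).indicator (fun _ => (1:ℝ≥0∞)) c
          = ((Finset.univ.filter fun j => c ∈ C j).card : ℝ≥0∞) := by
        rw [← Finset.sum_boole]
        congr 1
        funext j
        simp [Set.indicator_apply]
      rw [this]
      have hcard : (Finset.univ.filter fun j => c ∈ C j).card ≤ k := by
        have := card_lowRank_le (fun i => f (c i)) k
        convert this using 2
        ext j; simp [hC]
      exact_mod_cast hcard
    calc (M + 1 : ℝ≥0∞) * ν (C (Fin.last M)) = ∑ j : Fin (M+1), ν (C j) := h1.symm
      _ = _ := h2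
      _ ≤ ∫⁻ _, (k : ℝ≥0∞) ∂ν := lintegral_mono h3
      _ = (k : ℝ≥0∞) := by rw [lintegral_const]; simp [hν]
  rw [show ({c | ((Finset.univ.erase (Fin.last M)).filter
      fun i => f (c i) ≤ f (c (Fin.last M))).card < k} : Set (Fin (M+1) → Z))
      = C (Fin.last M) from rfl]
  rw [ENNReal.le_div_iff_mul_le (Or.inl (by simp)) (Or.inl (by simp))]
  rw [mul_comm]
  exact_mod_cast hsum

lemma cond_bound {d M : ℕ} (P : Measure ((Fin d → ℝ) × ℝ)) [IsProbabilityMeasure P]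
    (W : Set ((Fin d → ℝ) × (Fin M → (Fin d → ℝ) × ℝ))) (hW : MeasurableSet W)
    (Yset : (Fin d → ℝ) → Set ℝ)
    (hD : MeasurableSet {z : (Fin d → ℝ) × ℝ | z.2 ∈ Yset z.1})
    (β : ℝ≥0∞) (hβ : ∀ᵐ x ∂P.fst, β ≤ P.condKernel x (Yset x)) :
    β * (Measure.pi fun _ : Fin (M+1) => P)
        {c | ((c (Fin.last M)).1, fun j => c j.castSucc) ∈ W}
      ≤ (Measure.pi fun _ : Fin (M+1) => P)
        ({c | ((c (Fin.last M)).1, fun j => c j.castSucc) ∈ W}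
          ∩ {c | (c (Fin.last M)).2 ∈ Yset (c (Fin.last M)).1}) := by
  classical
  set ν' : Measure (Fin M → (Fin d → ℝ) × ℝ) := Measure.pi fun _ => P with hν'
  have : SFinite ν' := by
    haveI : SigmaFinite ν' := inferInstanceAs (SigmaFinite (Measure.pi fun _ : Fin M => P))
    infer_instance
  set e := MeasurableEquiv.piFinSuccAbove (fun _ : Fin (M+1) => (Fin d → ℝ) × ℝ) (Fin.last M) with he
  have hmp : MeasurePreserving e (Measure.pi fun _ : Fin (M+1) => P) (P.prod ν') := by
    have := measurePreserving_piFinSuccAbove (fun _ : Fin (M+1) => P) (Fin.last M)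
    exact this
  set S : Set (((Fin d → ℝ) × ℝ) × (Fin M → (Fin d → ℝ) × ℝ)) := {p | (p.1.1, p.2) ∈ W} with hS
  have hSmeas : MeasurableSet S :=
    ((measurable_fst.fst).prodMk measurable_snd) hW
  set B' : Set (((Fin d → ℝ) × ℝ) × (Fin M → (Fin d → ℝ) × ℝ)) := {p | p.1.2 ∈ Yset p.1.1} with hB'
  have hB'meas : MeasurableSet B' := measurable_fst hD
  have happ : ∀ c : Fin (M+1) → (Fin d → ℝ) × ℝ,
      e c = (c (Fin.last M), fun j => c j.castSucc) := by
    intro c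
    rw [he, MeasurableEquiv.piFinSuccAbove_apply]
    simp only [Fin.insertNthEquiv, Equiv.coe_fn_symm_mk]
    refine Prod.ext rfl ?_
    funext j
    show c ((Fin.last M).succAbove j) = c j.castSucc
    rw [Fin.succAbove_last]
  have hApre : {c : Fin (M+1) → (Fin d → ℝ) × ℝ | ((c (Fin.last M)).1, fun j => c j.castSucc) ∈ W}
      = e ⁻¹' S := by
    ext c; simp [hS, happ c]
  have hBpre : {c : Fin (M+1) → (Fin d → ℝ) × ℝ | (c (Fin.last M)).2 ∈ Yset (c (Fin.last M)).1}
      = e ⁻¹' B' := by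
    ext c; simp [hB', happ c]
  set h : (Fin d → ℝ) → ℝ≥0∞ := fun x => ν' (Prod.mk x ⁻¹' W) with hh
  have hhmeas : Measurable h := measurable_measure_prodMk_left hW
  set D : Set ((Fin d → ℝ) × ℝ) := {z | z.2 ∈ Yset z.1} with hDdef
  have hYx : ∀ x, MeasurableSet (Yset x) := by
    intro x
    have h1 : MeasurableSet ((fun y : ℝ => ((x, y) : (Fin d → ℝ) × ℝ)) ⁻¹'
        {z : (Fin d → ℝ) × ℝ | z.2 ∈ Yset z.1}) :=
      hD.preimage (measurable_const.prodMk measurable_id)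
    simpa [Set.preimage_setOf_eq] using h1
  -- ν A = ∫ h
  have hA_eq : (Measure.pi fun _ : Fin (M+1) => P)
      {c | ((c (Fin.last M)).1, fun j => c j.castSucc) ∈ W}
      = ∫⁻ x, h x ∂P.fst := by
    rw [hApre, hmp.measure_preimage hSmeas.nullMeasurableSet, Measure.prod_apply hSmeas]
    have : ∀ z : (Fin d → ℝ) × ℝ, ν' (Prod.mk z ⁻¹' S) = h z.1 := by
      intro z; rfl
    rw [lintegral_congr this]
    rw [show P.fst = P.map Prod.fst from rfl, lintegral_map hhmeas measurable_fst]
  -- ν (A ∩ B)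
  have hAB_eq : (Measure.pi fun _ : Fin (M+1) => P)
      ({c | ((c (Fin.last M)).1, fun j => c j.castSucc) ∈ W}
        ∩ {c | (c (Fin.last M)).2 ∈ Yset (c (Fin.last M)).1})
      = ∫⁻ x, h x * P.condKernel x (Yset x) ∂P.fst := by
    rw [hApre, hBpre, ← Set.preimage_inter,
      hmp.measure_preimage (hSmeas.inter hB'meas).nullMeasurableSet,
      Measure.prod_apply (hSmeas.inter hB'meas)]
    have hslice : ∀ z : (Fin d → ℝ) × ℝ,
        ν' (Prod.mk z ⁻¹' (S ∩ B')) = D.indicator (fun z => h z.1) z := by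
      intro z
      by_cases hz : z ∈ D
      · rw [Set.indicator_of_mem hz]
        congr 1
        ext v
        simp only [Set.mem_preimage, Set.mem_inter_iff, hS, hB', Set.mem_setOf_eq]
        have : z.2 ∈ Yset z.1 := hz
        simp [this]
      · rw [Set.indicator_of_notMem hz]
        have : Prod.mk z ⁻¹' (S ∩ B') = ∅ := by
          ext v
          simp only [Set.mem_preimage, Set.mem_inter_iff, hS, hB', Set.mem_setOf_eq]
          have : ¬ z.2 ∈ Yset z.1 := hz
          simp [this]
        rw [this, measure_empty]
    rw [lintegral_congr hslice]
    conv_lhs => rw [show P = P.fst.compProd P.condKernel from (P.disintegrate P.condKernel).symm]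
    have hfm : Measurable (fun z : (Fin d → ℝ) × ℝ => h z.1) := hhmeas.comp measurable_fst
    rw [Measure.lintegral_compProd (hfm.indicator hD)]
    congr 1
    funext x
    have : ∀ y : ℝ, D.indicator (fun z : (Fin d → ℝ) × ℝ => h z.1) (x, y)
        = (Yset x).indicator (fun _ => h x) y := by
      intro y
      simp [Set.indicator_apply, hDdef]
    rw [lintegral_congr this, lintegral_indicator_const (hYx x)]
  rw [hA_eq, hAB_eq, ← lintegral_const_mul β hhmeas]
  apply lintegral_mono_ae
  filter_upwards [hβ] with x hx
  calc β * h x = h x * β := mul_comm _ _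
    _ ≤ h x * P.condKernel x (Yset x) := mul_le_mul_right hx _

lemma meas_count {d M : ℕ} (flo : (Fin d → ℝ) × ℝ → ℝ) (hflo : Measurable flo)
    (g : (Fin d → ℝ) → ℝ) (hg : Measurable g) :
    (Measurable fun p : (Fin d → ℝ) × (Fin M → (Fin d → ℝ) × ℝ) =>
      (Finset.univ.filter fun i => flo (p.2 i) ≤ flo (p.1, g p.1)).card)
    ∧ (Measurable fun p : (Fin d → ℝ) × (Fin M → (Fin d → ℝ) × ℝ) =>
      (Finset.univ.filter fun i => flo (p.2 i) < flo (p.1, g p.1)).card) := by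
  classical
  have ha : Measurable fun p : (Fin d → ℝ) × (Fin M → (Fin d → ℝ) × ℝ) =>
      flo (p.1, g p.1) :=
    hflo.comp (measurable_fst.prodMk (hg.comp measurable_fst))
  have hb : ∀ i : Fin M, Measurable fun p : (Fin d → ℝ) × (Fin M → (Fin d → ℝ) × ℝ) =>
      flo (p.2 i) := fun i => hflo.comp ((measurable_pi_apply i).comp measurable_snd)
  constructor
  · have : (fun p : (Fin d → ℝ) × (Fin M → (Fin d → ℝ) × ℝ) =>
        (Finset.univ.filter fun i => flo (p.2 i) ≤ flo (p.1, g p.1)).card)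
        = fun p => ∑ i : Fin M, if flo (p.2 i) ≤ flo (p.1, g p.1) then 1 else 0 := by
      funext p; rw [Finset.card_filter]
    rw [this]
    exact Finset.measurable_sum _ fun i _ =>
      Measurable.ite (measurableSet_le (hb i) ha) measurable_const measurable_const
  · have : (fun p : (Fin d → ℝ) × (Fin M → (Fin d → ℝ) × ℝ) =>
        (Finset.univ.filter fun i => flo (p.2 i) < flo (p.1, g p.1)).card)
        = fun p => ∑ i : Fin M, if flo (p.2 i) < flo (p.1, g p.1) then 1 else 0 := by
      funext p; rw [Finset.card_filter]
    rw [this]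
    exact Finset.measurable_sum _ fun i _ =>
      Measurable.ite (measurableSet_lt (hb i) ha) measurable_const measurable_const

theorem slice_bound {d n₂ : ℕ} (hn₂ : 1 ≤ n₂)
    {α q r s : ℝ} (hα : α ∈ Set.Ioo (0 : ℝ) 1) (hq : q ∈ Set.Ioo (0 : ℝ) 1)
    (hr : 0 ≤ r) (hs : 0 ≤ s) (hrs : r + s = α)
    (P : Measure ((Fin d → ℝ) × ℝ)) [IsProbabilityMeasure P]
    (flo fhi : (Fin d → ℝ) × ℝ → ℝ)
    (hfloMeas : Measurable flo) (hfhiMeas : Measurable fhi)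
    (hfloMono : ∀ x, Monotone fun y => flo (x, y))
    (hfhiMono : ∀ x, Monotone fun y => fhi (x, y))
    (g : (Fin d → ℝ) → ℝ) (hg : IsCondQuantile q P g)
    (Scov : Set (Fin (n₂+1) → (Fin d → ℝ) × ℝ))
    (hScov : Scov = {c | kthSmallest (fun j : Fin n₂ => flo (c j.castSucc))
          ⌈r * q * ((n₂ : ℝ) + 1) - 1⌉
        ≤ ((flo ((c (Fin.last n₂)).1, g ((c (Fin.last n₂)).1)) : ℝ) : EReal) ∧
        ((fhi ((c (Fin.last n₂)).1, g ((c (Fin.last n₂)).1)) : ℝ) : EReal)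
        ≤ kthSmallest (fun j : Fin n₂ => fhi (c j.castSucc))
          ⌈(1 - s * (1 - q)) * ((n₂ : ℝ) + 1)⌉})
    (hSmeas : MeasurableSet Scov) :
    ENNReal.ofReal (1 - α) ≤ (Measure.pi fun _ : Fin (n₂+1) => P) Scov := by
  classical
  obtain ⟨hq0, hq1⟩ := hq
  obtain ⟨hα0, hα1⟩ := hα
  have hr1 : r < 1 := by linarith
  have hs1 : s < 1 := by linarith
  set ν := Measure.pi fun _ : Fin (n₂+1) => P with hν
  set klo : ℤ := ⌈r * q * ((n₂ : ℝ) + 1) - 1⌉ with hklo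
  set khi : ℤ := ⌈(1 - s * (1 - q)) * ((n₂ : ℝ) + 1)⌉ with hkhi
  set alo : (Fin (n₂+1) → (Fin d → ℝ) × ℝ) → ℝ :=
    fun c => flo ((c (Fin.last n₂)).1, g ((c (Fin.last n₂)).1)) with halo
  set ahi : (Fin (n₂+1) → (Fin d → ℝ) × ℝ) → ℝ :=
    fun c => fhi ((c (Fin.last n₂)).1, g ((c (Fin.last n₂)).1)) with hahi
  set Alo : Set (Fin (n₂+1) → (Fin d → ℝ) × ℝ) :=
    {c | (alo c : EReal) < kthSmallest (fun j : Fin n₂ => flo (c j.castSucc)) klo} with hAlo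
  set Ahi : Set (Fin (n₂+1) → (Fin d → ℝ) × ℝ) :=
    {c | kthSmallest (fun j : Fin n₂ => fhi (c j.castSucc)) khi < (ahi c : EReal)} with hAhi
  -- arithmetic
  have hklo_le : klo ≤ (n₂ : ℤ) := by
    rw [hklo]
    apply Int.ceil_le.mpr
    push_cast
    have hrq : r * q ≤ 1 := by nlinarith
    nlinarith [mul_nonneg (sub_nonneg.mpr hrq) (by positivity : (0:ℝ) ≤ (n₂:ℝ)+1)]
  have hkhi_ge : 1 ≤ khi := by
    rw [hkhi]
    have hsq : s * (1 - q) < 1 := by nlinarith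
    have : (0:ℝ) < (1 - s * (1 - q)) * ((n₂ : ℝ) + 1) := by
      apply mul_pos (by linarith) (by positivity)
    exact Int.ceil_pos.mpr this
  -- bound ν Alo
  have hAloBound : ν Alo ≤ ENNReal.ofReal r := by
    rcases le_or_gt klo 0 with hk0 | hk1
    · have : Alo = ∅ := by
        ext c
        simp only [hAlo, Set.mem_setOf_eq, Set.mem_empty_iff_false, iff_false]
        rw [kthSmallest, if_pos hk0]
        exact not_lt_bot
      rw [this]
      simp
    · -- 1 ≤ klo ≤ n₂
      set k := klo.toNat with hk
      set W : Set ((Fin d → ℝ) × (Fin n₂ → (Fin d → ℝ) × ℝ)) :=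
        {p | (Finset.univ.filter fun i => flo (p.2 i) ≤ flo (p.1, g p.1)).card < k} with hW
      have hWmeas : MeasurableSet W := by
        have := (meas_count (M := n₂) flo hfloMeas g hg.1).1
        exact this (by trivial : MeasurableSet (Set.Iio k))
      have hAloW : Alo = {c | ((c (Fin.last n₂)).1, fun j => c j.castSucc) ∈ W} := by
        ext c
        simp only [hAlo, Set.mem_setOf_eq, hW]
        rw [lt_kthSmallest_iff _ hk1 hklo_le]
      have hDlo : MeasurableSet {z : (Fin d → ℝ) × ℝ | z.2 ∈ Set.Iic (g z.1)} := by
        simp only [Set.mem_Iic]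
        exact measurableSet_le measurable_snd (hg.1.comp measurable_fst)
      have hcond := cond_bound P W hWmeas (fun x => Set.Iic (g x)) hDlo
        (ENNReal.ofReal q) (by filter_upwards [hg.2] with x hx using hx.1)
      rw [← hAloW] at hcond
      -- A ∩ B ⊆ C
      have hsub : Alo ∩ {c | (c (Fin.last n₂)).2 ∈ Set.Iic (g (c (Fin.last n₂)).1)}
          ⊆ {c | ((Finset.univ.erase (Fin.last n₂)).filter
              fun i => flo (c i) ≤ flo (c (Fin.last n₂))).card < k} := by
        rintro c ⟨hcA, hcB⟩
        simp only [Set.mem_setOf_eq] at hcB ⊢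
        rw [hAloW] at hcA
        simp only [Set.mem_setOf_eq, hW] at hcA
        have hlast : flo (c (Fin.last n₂)) ≤ alo c := by
          rw [halo]
          have := (hfloMono (c (Fin.last n₂)).1) hcB
          simpa using this
        have hinj : ((Finset.univ.erase (Fin.last n₂)).filter
            fun i => flo (c i) ≤ flo (c (Fin.last n₂))).card
            ≤ (Finset.univ.filter fun i : Fin n₂ =>
                flo (c i.castSucc) ≤ alo c).card := by
          refine Finset.card_le_card_of_injOn
            (fun j => if h : (j : ℕ) < n₂ then (⟨j, h⟩ : Fin n₂) else ⟨0, by omega⟩) ?_ ?_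
          · intro j hj
            simp only [Finset.mem_coe, Finset.mem_filter, Finset.mem_erase] at hj
            have hjlt : (j : ℕ) < n₂ := by
              rcases lt_or_eq_of_le (Nat.lt_succ_iff.mp j.2) with h | h
              · exact h
              · exact absurd (Fin.ext h : j = Fin.last n₂) hj.1.1
            simp only [Finset.mem_coe, Finset.mem_filter, Finset.mem_univ, true_and, dif_pos hjlt]
            have : (⟨j, hjlt⟩ : Fin n₂).castSucc = j := by
              apply Fin.ext; simp
            rw [this]
            exact le_trans hj.2 hlast
          · intro j₁ hj₁ j₂ hj₂ he
            simp only [Finset.coe_filter, Set.mem_setOf_eq, Finset.mem_erase] at hj₁ hj₂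
            have hjlt₁ : (j₁ : ℕ) < n₂ := by
              rcases lt_or_eq_of_le (Nat.lt_succ_iff.mp j₁.2) with h | h
              · exact h
              · exact absurd (Fin.ext h : j₁ = Fin.last n₂) hj₁.1.1
            have hjlt₂ : (j₂ : ℕ) < n₂ := by
              rcases lt_or_eq_of_le (Nat.lt_succ_iff.mp j₂.2) with h | h
              · exact h
              · exact absurd (Fin.ext h : j₂ = Fin.last n₂) hj₂.1.1
            have he' : (⟨(j₁:ℕ), hjlt₁⟩ : Fin n₂) = ⟨(j₂:ℕ), hjlt₂⟩ := by
              simpa [dif_pos hjlt₁, dif_pos hjlt₂] using he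
            exact Fin.ext (Fin.mk_eq_mk.mp he')
        exact lt_of_le_of_lt hinj hcA
      have hClo : ν {c | ((Finset.univ.erase (Fin.last n₂)).filter
            fun i => flo (c i) ≤ flo (c (Fin.last n₂))).card < k}
          ≤ (k : ℝ≥0∞) / (n₂ + 1) := by
        exact exch_bound P flo hfloMeas n₂ k
      have hkrq : (k : ℝ≥0∞) / (n₂ + 1) ≤ ENNReal.ofReal q * ENNReal.ofReal r := by
        have hkR : (k : ℝ) ≤ r * q * ((n₂ : ℝ) + 1) := by
          have h1 : (klo : ℝ) < (r * q * ((n₂ : ℝ) + 1) - 1) + 1 := Int.ceil_lt_add_one _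
          have h2 : (k : ℝ) = (klo : ℝ) := by
            rw [hk]
            exact_mod_cast congrArg (Int.cast : ℤ → ℝ) (Int.toNat_of_nonneg (le_of_lt hk1))
          linarith
        rw [← ENNReal.ofReal_mul hq0.le]
        have h3 : ((n₂:ℝ≥0∞) + 1) = ENNReal.ofReal ((n₂:ℝ) + 1) := by
          rw [ENNReal.ofReal_add (by positivity) zero_le_one]
          simp [ENNReal.ofReal_natCast]
        have h4 : (k : ℝ≥0∞) = ENNReal.ofReal (k : ℝ) := by
          simp [ENNReal.ofReal_natCast]
        rw [h3, h4, ← ENNReal.ofReal_div_of_pos (by positivity)]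
        apply ENNReal.ofReal_le_ofReal
        rw [div_le_iff₀ (by positivity)]
        calc (k:ℝ) ≤ r * q * ((n₂ : ℝ) + 1) := hkR
          _ = q * r * ((n₂ : ℝ) + 1) := by ring
      have : ENNReal.ofReal q * ν Alo ≤ ENNReal.ofReal q * ENNReal.ofReal r := by
        calc ENNReal.ofReal q * ν Alo ≤ _ := hcond
          _ ≤ (k : ℝ≥0∞) / (n₂ + 1) := le_trans (measure_mono hsub) hClo
          _ ≤ _ := hkrq
      exact (ENNReal.mul_le_mul_iff_right (by simp [hq0]) ENNReal.ofReal_ne_top).mp this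
  -- bound ν Ahi
  have hAhiBound : ν Ahi ≤ ENNReal.ofReal s := by
    rcases lt_or_ge (n₂ : ℤ) khi with hk0 | hk2
    · have : Ahi = ∅ := by
        ext c
        simp only [hAhi, Set.mem_setOf_eq, Set.mem_empty_iff_false, iff_false]
        rw [kthSmallest, if_neg (by omega), if_pos hk0]
        exact not_top_lt
      rw [this]
      simp
    · set k' := khi.toNat with hk'
      have hk'1 : 1 ≤ k' := by omega
      have hk'2 : k' ≤ n₂ := by omega
      set W' : Set ((Fin d → ℝ) × (Fin n₂ → (Fin d → ℝ) × ℝ)) :=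
        {p | k' ≤ (Finset.univ.filter fun i => fhi (p.2 i) < fhi (p.1, g p.1)).card} with hW'
      have hW'meas : MeasurableSet W' := by
        have := (meas_count (M := n₂) fhi hfhiMeas g hg.1).2
        exact this (by trivial : MeasurableSet (Set.Ici k'))
      have hAhiW : Ahi = {c | ((c (Fin.last n₂)).1, fun j => c j.castSucc) ∈ W'} := by
        ext c
        simp only [hAhi, Set.mem_setOf_eq, hW']
        rw [kthSmallest_lt_iff _ hkhi_ge hk2]
      have hDhi : MeasurableSet {z : (Fin d → ℝ) × ℝ | z.2 ∈ Set.Ici (g z.1)} := by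
        simp only [Set.mem_Ici]
        exact measurableSet_le (hg.1.comp measurable_fst) measurable_snd
      have hcond := cond_bound P W' hW'meas (fun x => Set.Ici (g x)) hDhi
        (ENNReal.ofReal (1 - q)) (by filter_upwards [hg.2] with x hx using hx.2)
      rw [← hAhiW] at hcond
      have hsub : Ahi ∩ {c | (c (Fin.last n₂)).2 ∈ Set.Ici (g (c (Fin.last n₂)).1)}
          ⊆ {c | ((Finset.univ.erase (Fin.last n₂)).filter
              fun i => (fun z => -fhi z) (c i) ≤ (fun z => -fhi z) (c (Fin.last n₂))).card
              < n₂ + 1 - k'} := by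
        rintro c ⟨hcA, hcB⟩
        simp only [Set.mem_setOf_eq] at hcB ⊢
        rw [hAhiW] at hcA
        simp only [Set.mem_setOf_eq, hW'] at hcA
        have hlast : ahi c ≤ fhi (c (Fin.last n₂)) := by
          rw [hahi]
          have := (hfhiMono (c (Fin.last n₂)).1) hcB
          simpa using this
        have hstep1 : k' ≤ ((Finset.univ.erase (Fin.last n₂)).filter
            fun i => fhi (c i) < fhi (c (Fin.last n₂))).card := by
          refine le_trans hcA ?_
          refine Finset.card_le_card_of_injOn (fun i => Fin.castSucc i) ?_ ?_
          · intro i hi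
            simp only [Finset.mem_coe, Finset.mem_filter, Finset.mem_univ, true_and] at hi
            simp only [Finset.mem_coe, Finset.mem_filter, Finset.mem_erase]
            refine ⟨⟨(Fin.castSucc_lt_last i).ne, Finset.mem_univ _⟩, ?_⟩
            exact lt_of_lt_of_le hi hlast
          · intro i₁ _ i₂ _ he
            exact Fin.castSucc_injective _ he
        have hsplit : ((Finset.univ.erase (Fin.last n₂)).filter
              fun i => fhi (c i) < fhi (c (Fin.last n₂))).card
            + ((Finset.univ.erase (Fin.last n₂)).filter
              fun i => -fhi (c i) ≤ -fhi (c (Fin.last n₂))).card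
            = n₂ := by
          have hcard : (Finset.univ.erase (Fin.last n₂)).card = n₂ := by
            rw [Finset.card_erase_of_mem (Finset.mem_univ _)]; simp
          have hneg : ((Finset.univ.erase (Fin.last n₂)).filter
              fun i => ¬ (fhi (c i) < fhi (c (Fin.last n₂))))
              = ((Finset.univ.erase (Fin.last n₂)).filter
              fun i => -fhi (c i) ≤ -fhi (c (Fin.last n₂))) := by
            apply Finset.filter_congr
            intro i _
            simp [not_lt]
          have h0 := Finset.card_filter_add_card_filter_not
            (p := fun i => fhi (c i) < fhi (c (Fin.last n₂)))
            (s := Finset.univ.erase (Fin.last n₂))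
          rw [hneg, hcard] at h0
          exact h0
        omega
      have hChi : ν {c | ((Finset.univ.erase (Fin.last n₂)).filter
            fun i => (fun z => -fhi z) (c i) ≤ (fun z => -fhi z) (c (Fin.last n₂))).card
            < n₂ + 1 - k'}
          ≤ ((n₂ + 1 - k' : ℕ) : ℝ≥0∞) / (n₂ + 1) :=
        exch_bound P (fun z => -fhi z) hfhiMeas.neg n₂ (n₂ + 1 - k')
      have hkrs : ((n₂ + 1 - k' : ℕ) : ℝ≥0∞) / (n₂ + 1)
          ≤ ENNReal.ofReal (1 - q) * ENNReal.ofReal s := by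
        have hkR : ((n₂ + 1 - k' : ℕ) : ℝ) ≤ (1 - q) * s * ((n₂ : ℝ) + 1) := by
          have h1 : (1 - s * (1 - q)) * ((n₂ : ℝ) + 1) ≤ (khi : ℝ) := Int.le_ceil _
          have h2 : (k' : ℝ) = (khi : ℝ) := by
            rw [hk']
            exact_mod_cast congrArg (Int.cast : ℤ → ℝ) (Int.toNat_of_nonneg (by omega))
          have h3 : ((n₂ + 1 - k' : ℕ) : ℝ) = (n₂ : ℝ) + 1 - (k' : ℝ) := by
            push_cast [Nat.cast_sub (by omega : k' ≤ n₂ + 1)]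
            ring
          rw [h3, h2]
          nlinarith
        rw [← ENNReal.ofReal_mul (by linarith)]
        have h3 : ((n₂:ℝ≥0∞) + 1) = ENNReal.ofReal ((n₂:ℝ) + 1) := by
          rw [ENNReal.ofReal_add (by positivity) zero_le_one]
          simp [ENNReal.ofReal_natCast]
        have h4 : ((n₂ + 1 - k' : ℕ) : ℝ≥0∞) = ENNReal.ofReal ((n₂ + 1 - k' : ℕ) : ℝ) := by
          simp [ENNReal.ofReal_natCast]
        rw [h3, h4, ← ENNReal.ofReal_div_of_pos (by positivity)]
        apply ENNReal.ofReal_le_ofReal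
        rw [div_le_iff₀ (by positivity)]
        exact hkR
      have : ENNReal.ofReal (1 - q) * ν Ahi
          ≤ ENNReal.ofReal (1 - q) * ENNReal.ofReal s := by
        calc ENNReal.ofReal (1 - q) * ν Ahi ≤ _ := hcond
          _ ≤ ((n₂ + 1 - k' : ℕ) : ℝ≥0∞) / (n₂ + 1) := le_trans (measure_mono hsub) hChi
          _ ≤ _ := hkrs
      exact (ENNReal.mul_le_mul_iff_right (by simp; linarith) ENNReal.ofReal_ne_top).mp this
  -- conclude
  have hcompl : Scovᶜ ⊆ Alo ∪ Ahi := by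
    intro c hc
    rw [hScov] at hc
    simp only [Set.mem_compl_iff, Set.mem_setOf_eq, not_and_or, not_le] at hc
    rcases hc with hc | hc
    · exact Or.inl hc
    · exact Or.inr hc
  have hcb : ν Scovᶜ ≤ ENNReal.ofReal α := by
    calc ν Scovᶜ ≤ ν (Alo ∪ Ahi) := measure_mono hcompl
      _ ≤ ν Alo + ν Ahi := measure_union_le _ _
      _ ≤ ENNReal.ofReal r + ENNReal.ofReal s := add_le_add hAloBound hAhiBound
      _ = ENNReal.ofReal α := by rw [← ENNReal.ofReal_add hr hs, hrs]
  have hsum : ν Scov + ν Scovᶜ = 1 := by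
    rw [measure_add_measure_compl hSmeas]
    exact measure_univ
  have h1 : (1 : ℝ≥0∞) - ENNReal.ofReal α ≤ ν Scov := by
    rw [tsub_le_iff_right]
    calc (1 : ℝ≥0∞) = ν Scov + ν Scovᶜ := hsum.symm
      _ ≤ ν Scov + ENNReal.ofReal α := add_le_add le_rfl hcb
  refine le_trans ?_ h1
  rw [ENNReal.ofReal_sub _ hα0.le]
  simp

/-- **Theorem 2.2** (split conformal coverage of conditional quantiles). -/
theorem statement_1 {d n₁ n₂ : ℕ} (hd : 1 ≤ d) (hn₁ : 1 ≤ n₁) (hn₂ : 1 ≤ n₂)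
    {α q r s : ℝ} (hα : α ∈ Set.Ioo (0 : ℝ) 1) (hq : q ∈ Set.Ioo (0 : ℝ) 1)
    (hr : 0 ≤ r) (hs : 0 ≤ s) (hrs : r + s = α)
    (P : Measure ((Fin d → ℝ) × ℝ)) [IsProbabilityMeasure P]
    (Flo Fhi : (Fin n₁ → ((Fin d → ℝ) × ℝ)) → ((Fin d → ℝ) × ℝ) → ℝ)
    (hFloMeas : ∀ data, Measurable (Flo data)) (hFhiMeas : ∀ data, Measurable (Fhi data))
    (hFloMono : ∀ data x, Monotone fun y => Flo data (x, y))
    (hFhiMono : ∀ data x, Monotone fun y => Fhi data (x, y))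
    (g : (Fin d → ℝ) → ℝ) (hg : IsCondQuantile q P g)
    (hmeas : MeasurableSet (quantileCoverageEvent (n₂ := n₂) q r s Flo Fhi g)) :
    ENNReal.ofReal (1 - α) ≤
      (Measure.pi fun _ : Fin (n₁ + n₂ + 1) => P)
        (quantileCoverageEvent (n₂ := n₂) q r s Flo Fhi g) := by
  classical
  set cov := quantileCoverageEvent (n₂ := n₂) q r s Flo Fhi g with hcov
  set ee : (Fin n₁ ⊕ Fin (n₂+1)) ≃ Fin (n₁ + (n₂+1)) := finSumFinEquiv with hee
  set e : ((Fin n₁ → (Fin d → ℝ) × ℝ) × (Fin (n₂+1) → (Fin d → ℝ) × ℝ))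
      ≃ᵐ (Fin (n₁ + n₂ + 1) → (Fin d → ℝ) × ℝ) :=
    ((MeasurableEquiv.sumPiEquivProdPi (fun _ : Fin n₁ ⊕ Fin (n₂+1) => (Fin d → ℝ) × ℝ)).symm).trans
      (MeasurableEquiv.piCongrLeft (fun _ : Fin (n₁ + (n₂+1)) => (Fin d → ℝ) × ℝ) ee) with he
  have hmp : MeasurePreserving e
      ((Measure.pi fun _ : Fin n₁ => P).prod (Measure.pi fun _ : Fin (n₂+1) => P))
      (Measure.pi fun _ : Fin (n₁ + n₂ + 1) => P) := by
    rw [he, MeasurableEquiv.coe_trans]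
    exact (measurePreserving_piCongrLeft (fun _ : Fin (n₁ + (n₂+1)) => P) ee).comp
      (measurePreserving_sumPiEquivProdPi_symm (fun _ => P))
  -- pointwise evaluation
  have heval : ∀ (t : Fin n₁ → (Fin d → ℝ) × ℝ) (c : Fin (n₂+1) → (Fin d → ℝ) × ℝ)
      (u : Fin n₁ ⊕ Fin (n₂+1)),
      e (t, c) (ee u) = Sum.rec t c u := by
    intro t c u
    show (Equiv.piCongrLeft (fun _ : Fin (n₁ + (n₂+1)) => (Fin d → ℝ) × ℝ) ee)
        ((Equiv.sumPiEquivProdPi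
          (fun _ : Fin n₁ ⊕ Fin (n₂+1) => (Fin d → ℝ) × ℝ)).symm (t, c)) (ee u)
      = Sum.rec t c u
    rw [Equiv.piCongrLeft_apply_apply, Equiv.sumPiEquivProdPi_symm_apply]
  have he1 : ∀ (t : Fin n₁ → (Fin d → ℝ) × ℝ) (c : Fin (n₂+1) → (Fin d → ℝ) × ℝ) (i : Fin n₁),
      e (t, c) (Fin.castLE (by omega : n₁ ≤ n₁ + n₂ + 1) i) = t i := by
    intro t c i
    have h : (Fin.castLE (by omega : n₁ ≤ n₁ + n₂ + 1) i) = ee (Sum.inl i) := by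
      rw [hee, finSumFinEquiv_apply_left]
      apply Fin.ext
      simp
    rw [h, heval]
  have he2 : ∀ (t : Fin n₁ → (Fin d → ℝ) × ℝ) (c : Fin (n₂+1) → (Fin d → ℝ) × ℝ) (j : Fin n₂),
      e (t, c) (⟨n₁ + j.1, by have := j.2; omega⟩ : Fin (n₁ + n₂ + 1)) = c j.castSucc := by
    intro t c j
    have h : (⟨n₁ + j.1, by have := j.2; omega⟩ : Fin (n₁ + n₂ + 1))
        = ee (Sum.inr (j.castSucc : Fin (n₂+1))) := by
      rw [hee, finSumFinEquiv_apply_right]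
      apply Fin.ext
      simp
    rw [h, heval]
  have he3 : ∀ (t : Fin n₁ → (Fin d → ℝ) × ℝ) (c : Fin (n₂+1) → (Fin d → ℝ) × ℝ),
      e (t, c) (Fin.last (n₁ + n₂)) = c (Fin.last n₂) := by
    intro t c
    have h : (Fin.last (n₁ + n₂) : Fin (n₁ + n₂ + 1))
        = ee (Sum.inr (Fin.last n₂)) := by
      rw [hee, finSumFinEquiv_apply_right]
      apply Fin.ext
      simp [Fin.last]
    rw [h, heval]
  -- slices
  have hslice : ∀ t : Fin n₁ → (Fin d → ℝ) × ℝ,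
      Prod.mk t ⁻¹' (⇑e ⁻¹' cov)
      = {c | kthSmallest (fun j : Fin n₂ => Flo t (c j.castSucc))
            ⌈r * q * ((n₂ : ℝ) + 1) - 1⌉
          ≤ ((Flo t ((c (Fin.last n₂)).1, g ((c (Fin.last n₂)).1)) : ℝ) : EReal) ∧
          ((Fhi t ((c (Fin.last n₂)).1, g ((c (Fin.last n₂)).1)) : ℝ) : EReal)
          ≤ kthSmallest (fun j : Fin n₂ => Fhi t (c j.castSucc))
            ⌈(1 - s * (1 - q)) * ((n₂ : ℝ) + 1)⌉} := by
    intro t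
    ext c
    simp only [Set.mem_preimage, hcov, quantileCoverageEvent, Set.mem_setOf_eq]
    have hdata : (fun i => e (t, c) (Fin.castLE (by omega : n₁ ≤ n₁ + n₂ + 1) i)) = t :=
      funext fun i => he1 t c i
    rw [hdata]
    have hcal1 : (fun j : Fin n₂ =>
        Flo t (e (t, c) (⟨n₁ + j.1, by have := j.2; omega⟩ : Fin (n₁ + n₂ + 1))))
        = fun j => Flo t (c j.castSucc) := funext fun j => by rw [he2]
    have hcal2 : (fun j : Fin n₂ =>
        Fhi t (e (t, c) (⟨n₁ + j.1, by have := j.2; omega⟩ : Fin (n₁ + n₂ + 1))))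
        = fun j => Fhi t (c j.castSucc) := funext fun j => by rw [he2]
    rw [hcal1, hcal2, he3]
  -- main computation
  rw [← hmp.measure_preimage hmeas.nullMeasurableSet]
  haveI : SigmaFinite (Measure.pi fun _ : Fin (n₂+1) => P) := inferInstance
  rw [Measure.prod_apply (e.measurable hmeas)]
  have hbound : ∀ t : Fin n₁ → (Fin d → ℝ) × ℝ,
      ENNReal.ofReal (1 - α)
        ≤ (Measure.pi fun _ : Fin (n₂+1) => P) (Prod.mk t ⁻¹' (⇑e ⁻¹' cov)) := by
    intro t
    apply slice_bound hn₂ hα hq hr hs hrs P (Flo t) (Fhi t) (hFloMeas t) (hFhiMeas t)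
      (hFloMono t) (hFhiMono t) g hg _ (hslice t)
    exact (e.measurable hmeas).preimage measurable_prodMk_left
  calc ENNReal.ofReal (1 - α)
      = ∫⁻ _, ENNReal.ofReal (1 - α) ∂(Measure.pi fun _ : Fin n₁ => P) := by
        rw [lintegral_const, measure_univ, mul_one]
    _ ≤ _ := lintegral_mono hbound
end

section
/- Let α ∈ (0,1), d, n ≥ 1, let P be a probability distribution on ℝ^d × ℝ, let m be a conditional median function of P, and let (X₁,Y₁),…,(X_{n+1},Y_{n+1}) be i.i.d. with law P. Let Ĉ be a map assigning to each ((x₁,y₁),…,(x_n,y_n), x) ∈ (ℝ^d × ℝ)^n × ℝ^d a convex subset (interval) of ℝ, such that the coverage events below are measurable. If ℙ( Y_{n+1} ∈ Ĉ((X₁,Y₁),…,(X_n,Y_n); X_{n+1}) ) ≥ 1 − α/2, then ℙ( m(X_{n+1}) ∈ Ĉ((X₁,Y₁),…,(X_n,Y_n); X_{n+1}) ) ≥ 1 − α. -/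
open MeasureTheory ProbabilityTheory
open scoped ENNReal NNReal

lemma convex_side {s : Set ℝ} (hs : Convex ℝ s) {t : ℝ} (ht : t ∉ s) :
    s ⊆ Set.Iio t ∨ s ⊆ Set.Ioi t := by
  by_cases h : ∃ a ∈ s, t < a
  · obtain ⟨a, ha, hta⟩ := h
    right
    intro y hy
    rcases lt_trichotomy y t with h1 | h1 | h1
    · exact absurd (hs.ordConnected.out hy ha ⟨h1.le, hta.le⟩) ht
    · exact absurd (h1 ▸ hy) ht
    · exact h1
  · left
    push_neg at h
    intro y hy
    exact lt_of_le_of_ne (h y hy) (fun he => ht (he ▸ hy))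

lemma half_bound {κ : Measure ℝ} [IsProbabilityMeasure κ] {t : ℝ} {s : Set ℝ}
    (hs : Convex ℝ s) (ht : t ∉ s)
    (h1 : (1:ℝ≥0∞)/2 ≤ κ (Set.Iic t)) (h2 : (1:ℝ≥0∞)/2 ≤ κ (Set.Ici t)) :
    κ s ≤ 1/2 := by
  rcases convex_side hs ht with h | h
  · calc κ s ≤ κ (Set.Iio t) := measure_mono h
      _ = 1 - κ (Set.Ici t) := by
          rw [← Set.compl_Ici, measure_compl measurableSet_Ici (measure_ne_top _ _),
            measure_univ]
      _ ≤ 1 - 1/2 := tsub_le_tsub_left h2 1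
      _ = 1/2 := ENNReal.sub_half ENNReal.one_ne_top
  · calc κ s ≤ κ (Set.Ioi t) := measure_mono h
      _ = 1 - κ (Set.Iic t) := by
          rw [← Set.compl_Iic, measure_compl measurableSet_Iic (measure_ne_top _ _),
            measure_univ]
      _ ≤ 1 - 1/2 := tsub_le_tsub_left h1 1
      _ = 1/2 := ENNReal.sub_half ENNReal.one_ne_top

/-- **Theorem 3.2**: any interval-valued algorithm with predictive coverage `1 - α/2`
covers the conditional median with probability at least `1 - α`.  Datapoints are indexed
by `Fin (n + 1)`, the last one being the test point. -/
theorem statement_5 {d n : ℕ} (hd : 1 ≤ d) (hn : 1 ≤ n) {α : ℝ} (hα : α ∈ Set.Ioo (0 : ℝ) 1)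
    (P : Measure ((Fin d → ℝ) × ℝ)) [IsProbabilityMeasure P]
    (m : (Fin d → ℝ) → ℝ) (hm : IsCondMedian P m)
    (C : (Fin n → ((Fin d → ℝ) × ℝ)) → (Fin d → ℝ) → Set ℝ)
    (hC : ∀ data x, Convex ℝ (C data x))
    (hmeasPred : MeasurableSet {ω : Fin (n + 1) → ((Fin d → ℝ) × ℝ) |
      (ω (Fin.last n)).2 ∈ C (fun i => ω i.castSucc) (ω (Fin.last n)).1})
    (hmeasMed : MeasurableSet {ω : Fin (n + 1) → ((Fin d → ℝ) × ℝ) |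
      m (ω (Fin.last n)).1 ∈ C (fun i => ω i.castSucc) (ω (Fin.last n)).1})
    (hpred : ENNReal.ofReal (1 - α / 2) ≤
      (Measure.pi fun _ : Fin (n + 1) => P)
        {ω | (ω (Fin.last n)).2 ∈ C (fun i => ω i.castSucc) (ω (Fin.last n)).1}) :
    ENNReal.ofReal (1 - α) ≤
      (Measure.pi fun _ : Fin (n + 1) => P)
        {ω | m (ω (Fin.last n)).1 ∈ C (fun i => ω i.castSucc) (ω (Fin.last n)).1} := by
  obtain ⟨hm_meas, hm_ae⟩ := hm
  let E := ((Fin d → ℝ) × ℝ)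
  set ν : Measure (Fin n → E) := Measure.pi fun _ => P with hνdef
  set μ : Measure (Fin (n+1) → E) := Measure.pi fun _ => P with hμdef
  set e : (Fin (n+1) → E) ≃ᵐ E × (Fin n → E) :=
    MeasurableEquiv.piFinSuccAbove (fun _ : Fin (n+1) => E) (Fin.last n) with hedef
  have hmp : MeasurePreserving e μ (P.prod ν) :=
    measurePreserving_piFinSuccAbove (fun _ : Fin (n+1) => P) (Fin.last n)
  set A := {ω : Fin (n + 1) → E |
      (ω (Fin.last n)).2 ∈ C (fun i => ω i.castSucc) (ω (Fin.last n)).1} with hAdef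
  set B := {ω : Fin (n + 1) → E |
      m (ω (Fin.last n)).1 ∈ C (fun i => ω i.castSucc) (ω (Fin.last n)).1} with hBdef
  set SA : Set (E × (Fin n → E)) := {p | p.1.2 ∈ C p.2 p.1.1} with hSAdef
  set SB : Set (E × (Fin n → E)) := {p | m p.1.1 ∈ C p.2 p.1.1} with hSBdef
  have hepre : ∀ ω : Fin (n+1) → E, e ω = (ω (Fin.last n), fun j => ω j.castSucc) := by
    intro ω
    rw [hedef]
    ext : 1
    · simp [MeasurableEquiv.piFinSuccAbove_apply]
    · funext j
      simp [MeasurableEquiv.piFinSuccAbove_apply, Fin.succAbove_last, Fin.init]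
  have hpreA : e ⁻¹' SA = A := by
    ext ω; simp only [Set.mem_preimage, hepre, hSAdef, hAdef, Set.mem_setOf_eq]
  have hpreB : e ⁻¹' SB = B := by
    ext ω; simp only [Set.mem_preimage, hepre, hSBdef, hBdef, Set.mem_setOf_eq]
  have hSA : MeasurableSet SA := by
    have : SA = e.symm ⁻¹' A := by rw [← hpreA]; ext p; simp
    rw [this]; exact e.symm.measurable hmeasPred
  have hSB : MeasurableSet SB := by
    have : SB = e.symm ⁻¹' B := by rw [← hpreB]; ext p; simp
    rw [this]; exact e.symm.measurable hmeasMed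
  have hμA : μ A = (P.prod ν) SA := by
    rw [← hpreA]; exact hmp.measure_preimage hSA.nullMeasurableSet
  have hμB : μ B = (P.prod ν) SB := by
    rw [← hpreB]; exact hmp.measure_preimage hSB.nullMeasurableSet
  -- sections
  have hsecA : ∀ data : Fin n → E, MeasurableSet {p : E | p.2 ∈ C data p.1} := by
    intro data
    have : {p : E | p.2 ∈ C data p.1} = (fun p : E => (p, data)) ⁻¹' SA := rfl
    rw [this]; exact (measurable_id.prodMk measurable_const) hSA
  have hT : ∀ data : Fin n → E, MeasurableSet {x : Fin d → ℝ | m x ∈ C data x} := by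
    intro data
    have : {x : Fin d → ℝ | m x ∈ C data x}
        = (fun x : Fin d → ℝ => ((x, (0:ℝ)), data)) ⁻¹' SB := rfl
    rw [this]
    exact ((measurable_id.prodMk measurable_const).prodMk measurable_const) hSB
  -- inner bound
  have hinner : ∀ data : Fin n → E,
      P {p : E | p.2 ∈ C data p.1} ≤ 1/2 + (1/2) * P.fst {x | m x ∈ C data x} := by
    intro data
    conv_lhs => rw [← P.disintegrate P.condKernel]
    rw [Measure.compProd_apply (hsecA data)]
    have hbound : ∀ᵐ x ∂P.fst,
        P.condKernel x (Prod.mk x ⁻¹' {p : E | p.2 ∈ C data p.1})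
          ≤ 1/2 + (1/2) * ({x | m x ∈ C data x}.indicator (fun _ => (1:ℝ≥0∞)) x) := by
      filter_upwards [hm_ae] with x hx
      by_cases hmem : m x ∈ C data x
      · have h1 : P.condKernel x (Prod.mk x ⁻¹' {p : E | p.2 ∈ C data p.1}) ≤ 1 :=
          prob_le_one
        calc P.condKernel x (Prod.mk x ⁻¹' {p : E | p.2 ∈ C data p.1}) ≤ 1 := h1
          _ = 1/2 + (1/2) * 1 := by rw [mul_one, ENNReal.add_halves]
          _ = _ := by simp [Set.indicator, hmem]
      · have : Prod.mk x ⁻¹' {p : E | p.2 ∈ C data p.1} = C data x := rfl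
        rw [this]
        simp only [Set.indicator, Set.mem_setOf_eq, hmem, if_false, mul_zero, add_zero]
        exact half_bound (hC data x) hmem hx.1 hx.2
    calc ∫⁻ x, P.condKernel x (Prod.mk x ⁻¹' {p : E | p.2 ∈ C data p.1}) ∂P.fst
        ≤ ∫⁻ x, (1/2 + (1/2) * ({x | m x ∈ C data x}.indicator (fun _ => (1:ℝ≥0∞)) x)) ∂P.fst :=
          lintegral_mono_ae hbound
      _ = 1/2 + (1/2) * P.fst {x | m x ∈ C data x} := by
          rw [lintegral_add_left measurable_const, lintegral_const_mul' _ _ (by norm_num),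
            lintegral_indicator (hT data)]
          simp [lintegral_const]
  -- sections of SB
  have hsecB : ∀ data : Fin n → E,
      P ((fun p : E => (p, data)) ⁻¹' SB) = P.fst {x | m x ∈ C data x} := by
    intro data
    rw [Measure.fst_apply (hT data)]
    rfl
  have hAcalc : μ A ≤ 1/2 + (1/2) * μ B := by
    haveI : SigmaFinite (P : Measure E) := inferInstance
    haveI : SFinite ν := by rw [hνdef]; infer_instance
    rw [hμA, hμB, Measure.prod_apply_symm hSA, Measure.prod_apply_symm hSB]
    calc ∫⁻ data, P ((fun p : E => (p, data)) ⁻¹' SA) ∂ν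
        ≤ ∫⁻ data, (1/2 + (1/2) * P.fst {x | m x ∈ C data x}) ∂ν := by
          apply lintegral_mono
          intro data
          exact hinner data
      _ = 1/2 + (1/2) * ∫⁻ data, P.fst {x | m x ∈ C data x} ∂ν := by
          rw [lintegral_add_left measurable_const, lintegral_const_mul' _ _ (by norm_num)]
          simp [lintegral_const]
      _ = 1/2 + (1/2) * ∫⁻ data, P ((fun p : E => (p, data)) ⁻¹' SB) ∂ν := by
          congr 1
          congr 1
          exact lintegral_congr fun data => (hsecB data).symm
  -- final arithmetic
  have hμB1 : μ B ≤ 1 := prob_le_one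
  have hfin : μ B ≠ ⊤ := (lt_of_le_of_lt hμB1 ENNReal.one_lt_top).ne
  have key : ENNReal.ofReal (1 - α/2) ≤ 1/2 + (1/2) * μ B := le_trans hpred (le_trans le_rfl hAcalc)
  set b := (μ B).toReal with hb
  have hbnn : 0 ≤ b := ENNReal.toReal_nonneg
  have hrw : (1:ℝ≥0∞)/2 + (1/2) * μ B = ENNReal.ofReal (1/2 + (1/2) * b) := by
    rw [ENNReal.ofReal_add (by norm_num) (by positivity), ENNReal.ofReal_mul (by norm_num)]
    rw [ENNReal.ofReal_toReal hfin]
    norm_num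
    rw [ENNReal.ofReal_div_of_pos (by norm_num)]
    norm_num
  rw [hrw] at key
  have hreal : 1 - α/2 ≤ 1/2 + (1/2) * b := by
    have := (ENNReal.ofReal_le_ofReal_iff (by positivity)).mp key
    linarith
  have : 1 - α ≤ b := by linarith
  calc ENNReal.ofReal (1 - α) ≤ ENNReal.ofReal b := ENNReal.ofReal_le_ofReal this
    _ = μ B := ENNReal.ofReal_toReal hfin
end

section
/- Let q ∈ (0,1), r, s ≥ 0, let d, n ≥ 1, let P be a probability distribution on ℝ^d × ℝ, let g be a conditional q-quantile function of P, and let (X₁,Y₁),…,(X_{n+1},Y_{n+1}) be i.i.d. with law P. Let L̂ and Ĥ be maps from (ℝ^d × ℝ)^n × ℝ^d to ℝ such that the events below are measurable, and write L = L̂((X₁,Y₁),…,(X_n,Y_n); X_{n+1}) and H = Ĥ((X₁,Y₁),…,(X_n,Y_n); X_{n+1}). If ℙ( Y_{n+1} ≥ L ) ≥ 1 − rq and ℙ( Y_{n+1} ≤ H ) ≥ 1 − s(1−q), then ℙ( L ≤ g(X_{n+1}) ≤ H ) ≥ 1 − (r + s). -/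
open MeasureTheory ProbabilityTheory
open scoped ENNReal NNReal

/-- First extension of Theorem 3.2 (Remark 3.1 / Appendix A.5): one-sided predictive
coverage at levels `1 - rq` (lower) and `1 - s(1-q)` (upper) implies conditional
`q`-quantile coverage at level `1 - (r + s)`.  Datapoints are indexed by `Fin (n + 1)`,
the last one being the test point. -/
theorem statement_6 {d n : ℕ} (hd : 1 ≤ d) (hn : 1 ≤ n)
    {q r s : ℝ} (hq : q ∈ Set.Ioo (0 : ℝ) 1) (hr : 0 ≤ r) (hs : 0 ≤ s)
    (P : Measure ((Fin d → ℝ) × ℝ)) [IsProbabilityMeasure P]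
    (g : (Fin d → ℝ) → ℝ) (hg : IsCondQuantile q P g)
    (L H : (Fin n → ((Fin d → ℝ) × ℝ)) → (Fin d → ℝ) → ℝ)
    (hmeasL : MeasurableSet {ω : Fin (n + 1) → ((Fin d → ℝ) × ℝ) |
      L (fun i => ω i.castSucc) (ω (Fin.last n)).1 ≤ (ω (Fin.last n)).2})
    (hmeasH : MeasurableSet {ω : Fin (n + 1) → ((Fin d → ℝ) × ℝ) |
      (ω (Fin.last n)).2 ≤ H (fun i => ω i.castSucc) (ω (Fin.last n)).1})
    (hmeasG : MeasurableSet {ω : Fin (n + 1) → ((Fin d → ℝ) × ℝ) |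
      L (fun i => ω i.castSucc) (ω (Fin.last n)).1 ≤ g (ω (Fin.last n)).1 ∧
        g (ω (Fin.last n)).1 ≤ H (fun i => ω i.castSucc) (ω (Fin.last n)).1})
    (hL : ENNReal.ofReal (1 - r * q) ≤
      (Measure.pi fun _ : Fin (n + 1) => P)
        {ω | L (fun i => ω i.castSucc) (ω (Fin.last n)).1 ≤ (ω (Fin.last n)).2})
    (hH : ENNReal.ofReal (1 - s * (1 - q)) ≤
      (Measure.pi fun _ : Fin (n + 1) => P)
        {ω | (ω (Fin.last n)).2 ≤ H (fun i => ω i.castSucc) (ω (Fin.last n)).1}) :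
    ENNReal.ofReal (1 - (r + s)) ≤
      (Measure.pi fun _ : Fin (n + 1) => P)
        {ω | L (fun i => ω i.castSucc) (ω (Fin.last n)).1 ≤ g (ω (Fin.last n)).1 ∧
          g (ω (Fin.last n)).1 ≤ H (fun i => ω i.castSucc) (ω (Fin.last n)).1} := by
  classical
  obtain ⟨hq0, hq1⟩ := hq
  rcases lt_or_ge 1 (r + s) with hrs | hrs
  · calc ENNReal.ofReal (1 - (r + s)) = 0 := by
          rw [ENNReal.ofReal_eq_zero]; linarith
    _ ≤ _ := zero_le
  set μ : Measure (Fin (n + 1) → ((Fin d → ℝ) × ℝ)) := Measure.pi fun _ => P with hμ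
  set ρ : Measure (Fin n → ((Fin d → ℝ) × ℝ)) := Measure.pi fun _ : Fin n => P with hρ
  set e : (Fin (n + 1) → ((Fin d → ℝ) × ℝ)) ≃ᵐ ((Fin d → ℝ) × ℝ) × (Fin n → ((Fin d → ℝ) × ℝ)) :=
    MeasurableEquiv.piFinSuccAbove (fun _ => ((Fin d → ℝ) × ℝ)) (Fin.last n) with he
  have hmp : MeasurePreserving e μ (P.prod ρ) :=
    measurePreserving_piFinSuccAbove (fun _ => P) (Fin.last n)
  have heapp : ∀ ω : Fin (n + 1) → ((Fin d → ℝ) × ℝ),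
      e ω = (ω (Fin.last n), fun j => ω j.castSucc) := by
    intro ω
    rw [he, MeasurableEquiv.piFinSuccAbove_apply]
    refine Prod.ext rfl (funext fun j => ?_)
    show ω ((Fin.last n).succAbove j) = ω j.castSucc
    rw [Fin.succAbove_last]
  set BL : Set (((Fin d → ℝ) × ℝ) × (Fin n → ((Fin d → ℝ) × ℝ))) := {pt | L pt.2 pt.1.1 ≤ pt.1.2} with hBLdef
  set BH : Set (((Fin d → ℝ) × ℝ) × (Fin n → ((Fin d → ℝ) × ℝ))) := {pt | pt.1.2 ≤ H pt.2 pt.1.1} with hBHdef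
  set BG : Set (((Fin d → ℝ) × ℝ) × (Fin n → ((Fin d → ℝ) × ℝ))) :=
    {pt | L pt.2 pt.1.1 ≤ g pt.1.1 ∧ g pt.1.1 ≤ H pt.2 pt.1.1} with hBGdef
  have hSL : {ω : Fin (n + 1) → ((Fin d → ℝ) × ℝ) |
      L (fun i => ω i.castSucc) (ω (Fin.last n)).1 ≤ (ω (Fin.last n)).2} = e ⁻¹' BL := by
    ext ω; simp [Set.mem_preimage, heapp ω, hBLdef]
  have hSH : {ω : Fin (n + 1) → ((Fin d → ℝ) × ℝ) |
      (ω (Fin.last n)).2 ≤ H (fun i => ω i.castSucc) (ω (Fin.last n)).1} = e ⁻¹' BH := by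
    ext ω; simp [Set.mem_preimage, heapp ω, hBHdef]
  have hSG : {ω : Fin (n + 1) → ((Fin d → ℝ) × ℝ) |
      L (fun i => ω i.castSucc) (ω (Fin.last n)).1 ≤ g (ω (Fin.last n)).1 ∧
        g (ω (Fin.last n)).1 ≤ H (fun i => ω i.castSucc) (ω (Fin.last n)).1} = e ⁻¹' BG := by
    ext ω; simp [Set.mem_preimage, heapp ω, hBGdef]
  have hBLm : MeasurableSet BL := by
    rw [← e.measurableSet_preimage, ← hSL]; exact hmeasL
  have hBHm : MeasurableSet BH := by
    rw [← e.measurableSet_preimage, ← hSH]; exact hmeasH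
  have hBGm : MeasurableSet BG := by
    rw [← e.measurableSet_preimage, ← hSG]; exact hmeasG
  have hmeq : ∀ B : Set (((Fin d → ℝ) × ℝ) × (Fin n → ((Fin d → ℝ) × ℝ))), MeasurableSet B → μ (e ⁻¹' B) = (P.prod ρ) B :=
    fun B hB => hmp.measure_preimage hB.nullMeasurableSet
  -- transfer hypotheses
  rw [hSL, hmeq BL hBLm] at hL
  rw [hSH, hmeq BH hBHm] at hH
  rw [hSG, hmeq BG hBGm]
  -- complements have small measure
  have one_sub_le : ∀ a b : ℝ, (1 : ℝ≥0∞) - ENNReal.ofReal (1 - a) ≤ ENNReal.ofReal a := by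
    intro a b
    rw [tsub_le_iff_right]
    calc (1 : ℝ≥0∞) = ENNReal.ofReal (a + (1 - a)) := by norm_num
    _ ≤ ENNReal.ofReal a + ENNReal.ofReal (1 - a) := ENNReal.ofReal_add_le
  have hLc : (P.prod ρ) BLᶜ ≤ ENNReal.ofReal (r * q) := by
    rw [prob_compl_eq_one_sub hBLm]
    exact (tsub_le_tsub_left hL 1).trans (one_sub_le (r * q) 0)
  have hHc : (P.prod ρ) BHᶜ ≤ ENNReal.ofReal (s * (1 - q)) := by
    rw [prob_compl_eq_one_sub hBHm]
    exact (tsub_le_tsub_left hH 1).trans (one_sub_le (s * (1 - q)) 0)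
  -- disintegration
  have hP : P.fst ⊗ₘ P.condKernel = P := P.disintegrate P.condKernel
  have slice : ∀ B : Set (((Fin d → ℝ) × ℝ) × (Fin n → ((Fin d → ℝ) × ℝ))), MeasurableSet B → ∀ t,
      P ((fun p : ((Fin d → ℝ) × ℝ) => (p, t)) ⁻¹' B) =
        ∫⁻ x, P.condKernel x {y | ((x, y), t) ∈ B} ∂P.fst := by
    intro B hB t
    have hs : MeasurableSet ((fun p : ((Fin d → ℝ) × ℝ) => (p, t)) ⁻¹' B) :=
      hB.preimage (measurable_prodMk_right)
    conv_lhs => rw [← hP]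
    rw [Measure.compProd_apply hs]
    rfl
  set c₁ : ℝ≥0∞ := (ENNReal.ofReal q)⁻¹ with hc₁
  set c₂ : ℝ≥0∞ := (ENNReal.ofReal (1 - q))⁻¹ with hc₂
  have hq0' : ENNReal.ofReal q ≠ 0 := by
    simp [ENNReal.ofReal_eq_zero]; linarith
  have hq1' : ENNReal.ofReal (1 - q) ≠ 0 := by
    simp [ENNReal.ofReal_eq_zero]; linarith
  -- measurability of slice kernels
  have hker : ∀ (B : Set (((Fin d → ℝ) × ℝ) × (Fin n → ((Fin d → ℝ) × ℝ)))), MeasurableSet B → ∀ t,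
      Measurable fun x => P.condKernel x {y | ((x, y), t) ∈ B} := by
    intro B hB t
    have hsB : MeasurableSet {xy : (Fin d → ℝ) × ℝ | ((xy.1, xy.2), t) ∈ B} := by
      have : MeasurableSet ((fun xy : ((Fin d → ℝ) × ℝ) => (xy, t)) ⁻¹' B) :=
        hB.preimage measurable_prodMk_right
      convert this using 1
      rfl
    exact Kernel.measurable_kernel_prodMk_left hsB
  -- pointwise bound for each fixed t
  have hmain : ∀ t, P ((fun p : ((Fin d → ℝ) × ℝ) => (p, t)) ⁻¹' BGᶜ) ≤
      c₁ * P ((fun p : ((Fin d → ℝ) × ℝ) => (p, t)) ⁻¹' BLᶜ) + c₂ * P ((fun p : ((Fin d → ℝ) × ℝ) => (p, t)) ⁻¹' BHᶜ) := by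
    intro t
    rw [slice _ hBGm.compl t, slice _ hBLm.compl t, slice _ hBHm.compl t]
    calc ∫⁻ x, P.condKernel x {y | ((x, y), t) ∈ BGᶜ} ∂P.fst
        ≤ ∫⁻ x, (c₁ * P.condKernel x {y | ((x, y), t) ∈ BLᶜ}
            + c₂ * P.condKernel x {y | ((x, y), t) ∈ BHᶜ}) ∂P.fst := by
          refine lintegral_mono_ae ?_
          filter_upwards [hg.2] with x hx
          by_cases hc : L t x ≤ g x ∧ g x ≤ H t x
          · have hempty : {y | ((x, y), t) ∈ BGᶜ} = (∅ : Set ℝ) := by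
              ext y; simp [hBGdef, hc.1, hc.2]
            rw [hempty]
            simp
          · have huniv : {y | ((x, y), t) ∈ BGᶜ} = (Set.univ : Set ℝ) := by
              ext y; simp [hBGdef, hc]
            rw [huniv, measure_univ]
            rcases not_and_or.mp hc with h | h
            · have hlt : g x < L t x := lt_of_not_ge h
              have hsub : Set.Iic (g x) ⊆ {y | ((x, y), t) ∈ BLᶜ} := by
                intro y hy
                simp only [hBLdef, Set.mem_compl_iff, Set.mem_setOf_eq, not_le]
                exact lt_of_le_of_lt hy hlt
              calc (1 : ℝ≥0∞) = c₁ * ENNReal.ofReal q :=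
                    (ENNReal.inv_mul_cancel hq0' ENNReal.ofReal_ne_top).symm
              _ ≤ c₁ * P.condKernel x {y | ((x, y), t) ∈ BLᶜ} :=
                    mul_le_mul_right (hx.1.trans (measure_mono hsub)) _
              _ ≤ _ := le_self_add
            · have hlt : H t x < g x := lt_of_not_ge h
              have hsub : Set.Ici (g x) ⊆ {y | ((x, y), t) ∈ BHᶜ} := by
                intro y hy
                simp only [hBHdef, Set.mem_compl_iff, Set.mem_setOf_eq, not_le]
                exact lt_of_lt_of_le hlt hy
              calc (1 : ℝ≥0∞) = c₂ * ENNReal.ofReal (1 - q) :=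
                    (ENNReal.inv_mul_cancel hq1' ENNReal.ofReal_ne_top).symm
              _ ≤ c₂ * P.condKernel x {y | ((x, y), t) ∈ BHᶜ} :=
                    mul_le_mul_right (hx.2.trans (measure_mono hsub)) _
              _ ≤ _ := le_add_self
      _ = c₁ * ∫⁻ x, P.condKernel x {y | ((x, y), t) ∈ BLᶜ} ∂P.fst
            + c₂ * ∫⁻ x, P.condKernel x {y | ((x, y), t) ∈ BHᶜ} ∂P.fst := by
          rw [lintegral_add_left ((hker _ hBLm.compl t).const_mul c₁),
            lintegral_const_mul c₁ (hker _ hBLm.compl t),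
            lintegral_const_mul c₂ (hker _ hBHm.compl t)]
  -- integrate over t
  haveI : SigmaFinite ρ := by rw [hρ]; infer_instance
  have hGc : (P.prod ρ) BGᶜ ≤ c₁ * (P.prod ρ) BLᶜ + c₂ * (P.prod ρ) BHᶜ := by
    rw [Measure.prod_apply_symm hBGm.compl, Measure.prod_apply_symm hBLm.compl,
      Measure.prod_apply_symm hBHm.compl]
    calc ∫⁻ t, P ((fun p : ((Fin d → ℝ) × ℝ) => (p, t)) ⁻¹' BGᶜ) ∂ρ
        ≤ ∫⁻ t, (c₁ * P ((fun p : ((Fin d → ℝ) × ℝ) => (p, t)) ⁻¹' BLᶜ)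
            + c₂ * P ((fun p : ((Fin d → ℝ) × ℝ) => (p, t)) ⁻¹' BHᶜ)) ∂ρ := lintegral_mono hmain
      _ = _ := by
          rw [lintegral_add_left ((measurable_measure_prodMk_right hBLm.compl).const_mul c₁),
            lintegral_const_mul c₁ (measurable_measure_prodMk_right hBLm.compl),
            lintegral_const_mul c₂ (measurable_measure_prodMk_right hBHm.compl)]
  have hGc2 : (P.prod ρ) BGᶜ ≤ ENNReal.ofReal r + ENNReal.ofReal s := by
    refine hGc.trans ?_
    have h1 : c₁ * (P.prod ρ) BLᶜ ≤ ENNReal.ofReal r := by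
      calc c₁ * (P.prod ρ) BLᶜ ≤ c₁ * ENNReal.ofReal (r * q) := mul_le_mul_right hLc _
      _ = ENNReal.ofReal r := by
          rw [ENNReal.ofReal_mul hr, hc₁, mul_comm (ENNReal.ofReal r), ← mul_assoc,
            ENNReal.inv_mul_cancel hq0' ENNReal.ofReal_ne_top, one_mul]
    have h2 : c₂ * (P.prod ρ) BHᶜ ≤ ENNReal.ofReal s := by
      calc c₂ * (P.prod ρ) BHᶜ ≤ c₂ * ENNReal.ofReal (s * (1 - q)) := mul_le_mul_right hHc _
      _ = ENNReal.ofReal s := by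
          rw [ENNReal.ofReal_mul hs, hc₂, mul_comm (ENNReal.ofReal s), ← mul_assoc,
            ENNReal.inv_mul_cancel hq1' ENNReal.ofReal_ne_top, one_mul]
    exact add_le_add h1 h2
  -- conclude
  have hfinal : (P.prod ρ) BG = 1 - (P.prod ρ) BGᶜ := by
    have := prob_compl_eq_one_sub (μ := P.prod ρ) hBGm.compl
    rwa [compl_compl] at this
  rw [hfinal]
  refine le_trans ?_ (tsub_le_tsub_left hGc2 1)
  refine ENNReal.le_sub_of_add_le_right (by finiteness) ?_
  rw [← ENNReal.ofReal_add hr hs, ← ENNReal.ofReal_add (by linarith) (by linarith),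
    sub_add_cancel, ENNReal.ofReal_one]
end

section
/- Let n ≥ 0 and δ ∈ (0,1/2). Let (X_i, B_i), i = 0, 1, …, n, be i.i.d. pairs where X_i ~ Uniform[−1/2, 1/2] and B_i ∈ {0,1} is independent of X_i with ℙ(B_i = 1) = 1/2 + δ, and set Y_i = X_i·B_i. Define M_R = #{ i ∈ {1,…,n} : |X_i| ≥ |X₀| } and M_E = #{ i ∈ {1,…,n} : |Y_i| ≥ |X₀| }. Then for all integers 0 ≤ k ≤ j ≤ n, ℙ( M_R = j and M_E = k ) = (1/(n+1)) · C(j,k) · (1/2 + δ)^k · (1/2 − δ)^{j−k}; equivalently, conditionally on M_R = j the count M_E has the Binomial(j, 1/2 + δ) distribution. -/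
open MeasureTheory ProbabilityTheory
open scoped ENNReal NNReal

/-- The Bernoulli-type law of `B ∈ {true, false}` with `ℙ(B = true) = 1/2 + δ`. -/
noncomputable def bernHalfPlus (δ : ℝ) : Measure Bool :=
  ENNReal.ofReal (1 / 2 + δ) • Measure.dirac true + ENNReal.ofReal (1 / 2 - δ) • Measure.dirac false

/-- The law of a pair `(X, B)` with `X ~ Uniform[-1/2, 1/2]` and, independently,
`B ∈ {0,1}` with `ℙ(B = 1) = 1/2 + δ`. -/
noncomputable def lawXB (δ : ℝ) : Measure (ℝ × Bool) :=
  (volume.restrict (Set.Icc (-(1 / 2) : ℝ) (1 / 2))).prod (bernHalfPlus δ)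


section StatementNineAux

open Finset intervalIntegral

lemma beta_nat (m j : ℕ) : ∫ x in (0:ℝ)..1, x ^ m * (1 - x) ^ j
    = (m.factorial * j.factorial : ℝ) / (m + j + 1).factorial := by
  have h1 : Complex.betaIntegral ((m : ℂ) + 1) ((j : ℂ) + 1)
      = ((∫ x in (0:ℝ)..1, x ^ m * (1 - x) ^ j : ℝ) : ℂ) := by
    rw [Complex.betaIntegral, ← intervalIntegral.integral_ofReal]
    apply intervalIntegral.integral_congr
    intro x hx
    simp only [add_sub_cancel_right, Complex.ofReal_mul, Complex.ofReal_pow,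
      Complex.ofReal_sub, Complex.ofReal_one, Complex.cpow_natCast]
  have h2 := Complex.Gamma_mul_Gamma_eq_betaIntegral (s := (m:ℂ)+1) (t := (j:ℂ)+1)
    (by simp [Complex.add_re]; positivity) (by simp [Complex.add_re]; positivity)
  rw [h1] at h2
  have e1 : Complex.Gamma ((m:ℂ)+1) = (m.factorial : ℂ) := Complex.Gamma_nat_eq_factorial m
  have e2 : Complex.Gamma ((j:ℂ)+1) = (j.factorial : ℂ) := Complex.Gamma_nat_eq_factorial j
  have e3 : Complex.Gamma ((m:ℂ)+1+((j:ℂ)+1)) = ((m+j+1).factorial : ℂ) := by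
    have : (m:ℂ)+1+((j:ℂ)+1) = ((m+j+1 : ℕ) : ℂ) + 1 := by push_cast; ring
    rw [this, Complex.Gamma_nat_eq_factorial]
  rw [e1, e2, e3] at h2
  have hne : ((m+j+1).factorial : ℂ) ≠ 0 :=
    Nat.cast_ne_zero.mpr (m+j+1).factorial_ne_zero
  have key : ((∫ x in (0:ℝ)..1, x ^ m * (1 - x) ^ j : ℝ) : ℂ)
      = ((m.factorial * j.factorial : ℝ) / ((m+j+1).factorial : ℝ) : ℝ) := by
    push_cast
    rw [eq_div_iff hne, mul_comm _ ((m+j+1).factorial : ℂ)]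
    exact h2.symm
  exact Complex.ofReal_injective key

lemma pi_count {α : Type*} [MeasurableSpace α] (μ : Measure α) [SigmaFinite μ]
    {n : ℕ} (pA pB : α → Prop) [DecidablePred pA] [DecidablePred pB]
    (hA : MeasurableSet {a | pA a}) (hB : MeasurableSet {a | pB a})
    (hBA : ∀ a, pB a → pA a) (j k : ℕ) :
    (Measure.pi fun _ : Fin n => μ)
      {ω | (univ.filter fun i => pA (ω i)).card = j ∧
           (univ.filter fun i => pB (ω i)).card = k} =
      (n.choose j) * (j.choose k) * μ {a | pB a} ^ k * (μ {a | pA a ∧ ¬ pB a}) ^ (j - k) *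
        (μ {a | ¬ pA a}) ^ (n - j) := by
  classical
  set C : (Σ _ : Finset (Fin n), Finset (Fin n)) → Set (Fin n → α) :=
    fun p => Set.pi Set.univ fun i =>
      if i ∈ p.2 then {a | pB a} else if i ∈ p.1 then {a | pA a ∧ ¬ pB a} else {a | ¬ pA a}
    with hC
  set P : Finset (Σ _ : Finset (Fin n), Finset (Fin n)) :=
    (univ.powersetCard j).sigma fun S => S.powersetCard k with hP
  have key : ∀ S T : Finset (Fin n), T ⊆ S → ∀ ω, ω ∈ C ⟨S, T⟩ →
      (univ.filter fun i => pA (ω i)) = S ∧ (univ.filter fun i => pB (ω i)) = T := by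
    intro S T hTS ω hω
    simp only [hC, Set.mem_pi, Set.mem_univ, forall_true_left] at hω
    constructor
    · ext i; simp only [mem_filter, mem_univ, true_and]
      constructor
      · intro hi; by_contra hiS
        have h := hω i
        rw [if_neg (fun h' => hiS (hTS h')), if_neg hiS] at h
        exact h hi
      · intro hi
        have h := hω i
        by_cases hiT : i ∈ T
        · rw [if_pos hiT] at h; exact hBA _ h
        · rw [if_neg hiT, if_pos hi] at h; exact h.1
    · ext i; simp only [mem_filter, mem_univ, true_and]
      constructor
      · intro hi; by_contra hiT
        have h := hω i; rw [if_neg hiT] at h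
        by_cases hiS : i ∈ S
        · rw [if_pos hiS] at h; exact h.2 hi
        · rw [if_neg hiS] at h; exact h (hBA _ hi)
      · intro hi; have h := hω i; rw [if_pos hi] at h; exact h
  have memP : ∀ p : (Σ _ : Finset (Fin n), Finset (Fin n)),
      p ∈ P ↔ p.1.card = j ∧ p.2 ⊆ p.1 ∧ p.2.card = k := by
    rintro ⟨S, T⟩
    simp [hP, Finset.mem_sigma, Finset.mem_powersetCard, and_assoc]
  have hE : {ω : Fin n → α | (univ.filter fun i => pA (ω i)).card = j ∧
      (univ.filter fun i => pB (ω i)).card = k} = ⋃ p ∈ P, C p := by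
    ext ω
    simp only [Set.mem_setOf_eq, Set.mem_iUnion]
    constructor
    · rintro ⟨hj, hk⟩
      refine ⟨⟨univ.filter (fun i => pA (ω i)), univ.filter (fun i => pB (ω i))⟩, ?_, ?_⟩
      · rw [memP]
        refine ⟨hj, ?_, hk⟩
        intro i hi
        rw [mem_filter] at hi ⊢
        exact ⟨hi.1, hBA _ hi.2⟩
      · intro i _
        simp only
        by_cases h2 : pB (ω i)
        · rw [if_pos (by simpa using h2)]; exact h2
        · rw [if_neg (by simpa using h2)]
          by_cases h1 : pA (ω i)
          · rw [if_pos (by simpa using h1)]; exact ⟨h1, h2⟩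
          · rw [if_neg (by simpa using h1)]; exact h1
    · rintro ⟨⟨S, T⟩, hp, hω⟩
      rw [memP] at hp
      obtain ⟨hScard, hTS, hTcard⟩ := hp
      obtain ⟨e1, e2⟩ := key S T hTS ω hω
      exact ⟨e1 ▸ hScard, e2 ▸ hTcard⟩
  have hCmeas : ∀ p : (Σ _ : Finset (Fin n), Finset (Fin n)), MeasurableSet (C p) := by
    intro p
    apply MeasurableSet.univ_pi
    intro i
    split_ifs
    · exact hB
    · have : {a | pA a ∧ ¬ pB a} = {a | pA a} \ {a | pB a} := rfl
      rw [this]; exact hA.diff hB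
    · exact hA.compl
  have hdisj : (P : Set (Σ _ : Finset (Fin n), Finset (Fin n))).PairwiseDisjoint C := by
    intro p hp q hq hpq
    rw [Finset.mem_coe, memP] at hp hq
    rw [Function.onFun, Set.disjoint_left]
    intro ω hωp hωq
    obtain ⟨e1, e2⟩ := key p.1 p.2 hp.2.1 ω hωp
    obtain ⟨f1, f2⟩ := key q.1 q.2 hq.2.1 ω hωq
    exact hpq (Sigma.ext (e1 ▸ f1.symm ▸ rfl) (by rw [← e2, f2]))
  rw [hE, measure_biUnion_finset hdisj (fun p _ => hCmeas p)]
  have hval : ∀ p ∈ P, (Measure.pi fun _ : Fin n => μ) (C p) =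
      μ {a | pB a} ^ k * (μ {a | pA a ∧ ¬ pB a}) ^ (j - k) * (μ {a | ¬ pA a}) ^ (n - j) := by
    rintro ⟨S, T⟩ hp
    rw [memP] at hp
    obtain ⟨hScard, hTS, hTcard⟩ := hp
    rw [hC, Measure.pi_pi]
    rw [← Finset.prod_sdiff (Finset.subset_univ S)]
    have h1 : ∀ i ∈ univ \ S, μ (if i ∈ (⟨S,T⟩ : Σ _ : Finset (Fin n), Finset (Fin n)).2
        then {a | pB a} else if i ∈ S then {a | pA a ∧ ¬ pB a} else {a | ¬ pA a})
        = μ {a | ¬ pA a} := by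
      intro i hi
      rw [Finset.mem_sdiff] at hi
      rw [if_neg (fun h' => hi.2 (hTS h')), if_neg hi.2]
    rw [Finset.prod_congr rfl h1, Finset.prod_const,
      Finset.card_sdiff_of_subset (Finset.subset_univ S), Finset.card_univ, Fintype.card_fin, hScard,
      ← Finset.prod_sdiff hTS]
    have h2 : ∀ i ∈ S \ T, μ (if i ∈ (⟨S,T⟩ : Σ _ : Finset (Fin n), Finset (Fin n)).2
        then {a | pB a} else if i ∈ S then {a | pA a ∧ ¬ pB a} else {a | ¬ pA a})
        = μ {a | pA a ∧ ¬ pB a} := by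
      intro i hi
      rw [Finset.mem_sdiff] at hi
      rw [if_neg hi.2, if_pos hi.1]
    have h3 : ∀ i ∈ T, μ (if i ∈ (⟨S,T⟩ : Σ _ : Finset (Fin n), Finset (Fin n)).2
        then {a | pB a} else if i ∈ S then {a | pA a ∧ ¬ pB a} else {a | ¬ pA a})
        = μ {a | pB a} := by
      intro i hi; rw [if_pos hi]
    rw [Finset.prod_congr rfl h2, Finset.prod_congr rfl h3, Finset.prod_const,
      Finset.prod_const, Finset.card_sdiff_of_subset hTS, hScard, hTcard]
    ring
  rw [Finset.sum_congr rfl hval, Finset.sum_const]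
  have hcard : P.card = n.choose j * j.choose k := by
    rw [hP, Finset.card_sigma]
    have : ∀ S ∈ (univ : Finset (Fin n)).powersetCard j, (S.powersetCard k).card = j.choose k := by
      intro S hS
      rw [Finset.card_powersetCard, (Finset.mem_powersetCard.mp hS).2]
    rw [Finset.sum_congr rfl this, Finset.sum_const, Finset.card_powersetCard,
      Finset.card_univ, Fintype.card_fin, smul_eq_mul]
  rw [hcard, nsmul_eq_mul, Nat.cast_mul]
  ring

variable {δ : ℝ}

instance (δ : ℝ) : IsFiniteMeasure (bernHalfPlus δ) := by
  constructor
  rw [bernHalfPlus]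
  simp only [Measure.add_apply, Measure.smul_apply, smul_eq_mul]
  exact ENNReal.add_lt_top.mpr ⟨(ENNReal.mul_lt_top ENNReal.ofReal_lt_top (by simp)),
    (ENNReal.mul_lt_top ENNReal.ofReal_lt_top (by simp))⟩

lemma bern_univ (hδ : δ ∈ Set.Ioo (0 : ℝ) (1 / 2)) : bernHalfPlus δ Set.univ = 1 := by
  obtain ⟨h1, h2⟩ := hδ
  simp only [bernHalfPlus, Measure.add_apply, Measure.smul_apply, Measure.dirac_apply,
    smul_eq_mul, Set.mem_univ, Set.indicator_of_mem, Pi.one_apply, mul_one]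
  rw [← ENNReal.ofReal_add (by linarith) (by linarith)]
  norm_num

theorem bern_prob (hδ : δ ∈ Set.Ioo (0 : ℝ) (1 / 2)) : True := trivial

lemma bern_true : bernHalfPlus δ {true} = ENNReal.ofReal (1/2 + δ) := by
  simp [bernHalfPlus, Measure.dirac_apply]

lemma bern_false : bernHalfPlus δ {false} = ENNReal.ofReal (1/2 - δ) := by
  simp [bernHalfPlus, Measure.dirac_apply]

lemma unif_univ : (volume.restrict (Set.Icc (-(1 / 2) : ℝ) (1 / 2))) Set.univ = 1 := by
  simp [Real.volume_Icc]
  norm_num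

lemma unif_ge {x : ℝ} (hx : x ∈ Set.Icc (-(1/2):ℝ) (1/2)) (hx0 : x ≠ 0) :
    (volume.restrict (Set.Icc (-(1 / 2) : ℝ) (1 / 2))) {t : ℝ | |x| ≤ |t|}
      = ENNReal.ofReal (1 - 2*|x|) := by
  have habs : |x| ≤ 1/2 := abs_le.mpr ⟨hx.1, hx.2⟩
  have hpos : 0 < |x| := abs_pos.mpr hx0
  have hmeas : MeasurableSet {t : ℝ | |x| ≤ |t|} :=
    measurableSet_le measurable_const continuous_abs.measurable
  rw [Measure.restrict_apply hmeas]
  have hset : {t : ℝ | |x| ≤ |t|} ∩ Set.Icc (-(1/2):ℝ) (1/2)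
      = Set.Icc (-(1/2):ℝ) (-|x|) ∪ Set.Icc (|x|) (1/2) := by
    ext t
    simp only [Set.mem_inter_iff, Set.mem_setOf_eq, Set.mem_Icc, Set.mem_union]
    rw [le_abs]
    constructor
    · rintro ⟨h | h, h3, h4⟩
      · right; exact ⟨h, h4⟩
      · left; exact ⟨h3, by linarith⟩
    · rintro (⟨h3, h4⟩ | ⟨h3, h4⟩)
      · exact ⟨Or.inr (by linarith), h3, by linarith⟩
      · exact ⟨Or.inl h3, by linarith, h4⟩
  rw [hset, measure_union _ measurableSet_Icc]
  · rw [Real.volume_Icc, Real.volume_Icc, ← ENNReal.ofReal_add (by linarith) (by linarith)]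
    congr 1; ring
  · apply Set.disjoint_left.mpr
    rintro t ⟨h1, h2⟩ ⟨h3, h4⟩
    linarith
lemma unif_lt {x : ℝ} (hx : x ∈ Set.Icc (-(1/2):ℝ) (1/2)) :
    (volume.restrict (Set.Icc (-(1 / 2) : ℝ) (1 / 2))) {t : ℝ | ¬ |x| ≤ |t|}
      = ENNReal.ofReal (2*|x|) := by
  have habs : |x| ≤ 1/2 := abs_le.mpr ⟨hx.1, hx.2⟩
  have hmeas : MeasurableSet {t : ℝ | ¬ |x| ≤ |t|} :=
    (measurableSet_le measurable_const continuous_abs.measurable).compl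
  rw [Measure.restrict_apply hmeas]
  have hset : {t : ℝ | ¬ |x| ≤ |t|} ∩ Set.Icc (-(1/2):ℝ) (1/2) = Set.Ioo (-|x|) (|x|) := by
    ext t
    simp only [Set.mem_inter_iff, Set.mem_setOf_eq, Set.mem_Icc, Set.mem_Ioo, not_le]
    rw [abs_lt]
    constructor
    · rintro ⟨⟨h1, h2⟩, _⟩; exact ⟨h1, h2⟩
    · rintro ⟨h1, h2⟩
      have h0 : 0 ≤ |x| := abs_nonneg x
      exact ⟨⟨h1, h2⟩, by linarith, by linarith⟩
  rw [hset, Real.volume_Ioo]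
  congr 1; ring

lemma lawXB_prob (hδ : δ ∈ Set.Ioo (0 : ℝ) (1 / 2)) : IsProbabilityMeasure (lawXB δ) := by
  constructor
  rw [lawXB, ← Set.univ_prod_univ, Measure.prod_prod, unif_univ, bern_univ hδ, one_mul]

lemma G_eval (hδ : δ ∈ Set.Ioo (0 : ℝ) (1 / 2)) (n j k : ℕ) (hkj : k ≤ j) (hjn : j ≤ n)
    {x : ℝ} (hx : x ∈ Set.Icc (-(1/2):ℝ) (1/2)) (hx0 : x ≠ 0) :
    (Measure.pi fun _ : Fin n => lawXB δ)
      {ω : Fin n → ℝ × Bool | (univ.filter fun i => |x| ≤ |(ω i).1|).card = j ∧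
        (univ.filter fun i => |x| ≤ |if (ω i).2 then (ω i).1 else 0|).card = k} =
      (n.choose j) * (j.choose k) * ENNReal.ofReal (1/2+δ) ^ k * ENNReal.ofReal (1/2-δ) ^ (j-k)
        * ENNReal.ofReal ((1-2*|x|)^j * (2*|x|)^(n-j)) := by
  classical
  haveI := lawXB_prob hδ
  have habs : |x| ≤ 1/2 := abs_le.mpr ⟨hx.1, hx.2⟩
  have hxpos : 0 < |x| := abs_pos.mpr hx0
  have hiff : ∀ q : ℝ × Bool, (|x| ≤ |if q.2 then q.1 else 0|) ↔ (|x| ≤ |q.1| ∧ q.2 = true) := by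
    rintro ⟨t, b⟩
    cases b
    · simp only [Bool.false_eq_true, if_false, abs_zero, and_false, iff_false, not_le]
      exact hxpos
    · simp
  have hset : {ω : Fin n → ℝ × Bool | (univ.filter fun i => |x| ≤ |(ω i).1|).card = j ∧
        (univ.filter fun i => |x| ≤ |if (ω i).2 then (ω i).1 else 0|).card = k}
      = {ω : Fin n → ℝ × Bool | (univ.filter fun i => |x| ≤ |(ω i).1|).card = j ∧
        (univ.filter fun i => (|x| ≤ |(ω i).1| ∧ (ω i).2 = true)).card = k} := by
    ext ω
    have : (univ.filter fun i => |x| ≤ |if (ω i).2 then (ω i).1 else 0|)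
        = (univ.filter fun i => (|x| ≤ |(ω i).1| ∧ (ω i).2 = true)) :=
      Finset.filter_congr fun i _ => by rw [hiff]
    rw [Set.mem_setOf_eq, Set.mem_setOf_eq, this]
  rw [hset]
  have hApm : MeasurableSet {q : ℝ × Bool | |x| ≤ |q.1|} :=
    measurableSet_le measurable_const measurable_fst.abs
  have hBpm : MeasurableSet {q : ℝ × Bool | |x| ≤ |q.1| ∧ q.2 = true} := by
    have : {q : ℝ × Bool | |x| ≤ |q.1| ∧ q.2 = true}
        = {q : ℝ × Bool | |x| ≤ |q.1|} ∩ (Prod.snd ⁻¹' {true}) := rfl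
    rw [this]
    exact hApm.inter (measurable_snd (measurableSet_singleton true))
  rw [pi_count (lawXB δ) (fun q => |x| ≤ |q.1|) (fun q => |x| ≤ |q.1| ∧ q.2 = true)
    hApm hBpm (fun q h => h.1) j k]
  have hB : lawXB δ {q : ℝ × Bool | |x| ≤ |q.1| ∧ q.2 = true}
      = ENNReal.ofReal (1-2*|x|) * ENNReal.ofReal (1/2+δ) := by
    have : {q : ℝ × Bool | |x| ≤ |q.1| ∧ q.2 = true}
        = {t : ℝ | |x| ≤ |t|} ×ˢ ({true} : Set Bool) := by
      ext ⟨t, b⟩; simp only [Set.mem_setOf_eq, Set.mem_prod, Set.mem_singleton_iff]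
    rw [lawXB, this, Measure.prod_prod, unif_ge hx hx0, bern_true]
  have hAB : lawXB δ {q : ℝ × Bool | (|x| ≤ |q.1|) ∧ ¬(|x| ≤ |q.1| ∧ q.2 = true)}
      = ENNReal.ofReal (1-2*|x|) * ENNReal.ofReal (1/2-δ) := by
    have : {q : ℝ × Bool | (|x| ≤ |q.1|) ∧ ¬(|x| ≤ |q.1| ∧ q.2 = true)}
        = {t : ℝ | |x| ≤ |t|} ×ˢ ({false} : Set Bool) := by
      ext ⟨t, b⟩; cases b <;> simp only [Set.mem_setOf_eq, Set.mem_prod, Set.mem_singleton_iff] <;> simp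
    rw [lawXB, this, Measure.prod_prod, unif_ge hx hx0, bern_false]
  have hAc : lawXB δ {q : ℝ × Bool | ¬ (|x| ≤ |q.1|)}
      = ENNReal.ofReal (2*|x|) := by
    have : {q : ℝ × Bool | ¬ (|x| ≤ |q.1|)}
        = {t : ℝ | ¬ |x| ≤ |t|} ×ˢ (Set.univ : Set Bool) := by
      ext ⟨t, b⟩; simp only [Set.mem_setOf_eq, Set.mem_prod, Set.mem_univ, and_true]
    rw [lawXB, this, Measure.prod_prod, unif_lt hx, bern_univ hδ, mul_one]
  rw [hB, hAB, hAc]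
  have h1 : (0:ℝ) ≤ 1 - 2*|x| := by linarith
  have h2 : (0:ℝ) ≤ 2*|x| := by positivity
  have e1 : ENNReal.ofReal ((1-2*|x|)^j * (2*|x|)^(n-j))
      = ENNReal.ofReal ((1-2*|x|)^k) * ENNReal.ofReal ((1-2*|x|)^(j-k))
        * ENNReal.ofReal ((2*|x|)^(n-j)) := by
    rw [← ENNReal.ofReal_mul (by positivity), ← ENNReal.ofReal_mul (by positivity), ← pow_add]
    congr 3
    omega
  rw [e1, mul_pow, mul_pow, ← ENNReal.ofReal_pow h1, ← ENNReal.ofReal_pow h1, ← ENNReal.ofReal_pow h2]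
  ring

lemma lint_g (n j : ℕ) (hjn : j ≤ n) :
    ∫⁻ x in Set.Icc (-(1/2):ℝ) (1/2), ENNReal.ofReal ((1-2*|x|)^j * (2*|x|)^(n-j))
      = ENNReal.ofReal ((j.factorial * (n-j).factorial : ℝ) / (n+1).factorial) := by
  set g : ℝ → ℝ := fun x => (1-2*|x|)^j * (2*|x|)^(n-j) with hg
  have hgc : Continuous g := by
    apply Continuous.mul <;> apply Continuous.pow <;> continuity
  have hInt : IntegrableOn g (Set.Icc (-(1/2):ℝ) (1/2)) volume :=
    hgc.integrableOn_Icc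
  have hnn : 0 ≤ᵐ[volume.restrict (Set.Icc (-(1/2):ℝ) (1/2))] g := by
    filter_upwards [ae_restrict_mem measurableSet_Icc] with x hx
    have h1 : |x| ≤ 1/2 := abs_le.mpr ⟨hx.1, hx.2⟩
    have : (0:ℝ) ≤ 1 - 2*|x| := by linarith
    positivity
  rw [← ofReal_integral_eq_lintegral_ofReal hInt hnn]
  congr 1
  have e0 : ∫ x in Set.Icc (-(1/2):ℝ) (1/2), g x = ∫ x in (-(1/2):ℝ)..(1/2), g x := by
    rw [MeasureTheory.integral_Icc_eq_integral_Ioc, intervalIntegral.integral_of_le (by norm_num)]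
  rw [e0]
  have hsplit : ∫ x in (-(1/2):ℝ)..(1/2), g x
      = (∫ x in (-(1/2):ℝ)..0, g x) + ∫ x in (0:ℝ)..(1/2), g x := by
    rw [intervalIntegral.integral_add_adjacent_intervals] <;>
      exact hgc.intervalIntegrable _ _
  have heven : ∫ x in (-(1/2):ℝ)..0, g x = ∫ x in (0:ℝ)..(1/2), g x := by
    have : ∫ x in (0:ℝ)..(1/2), g (-x) = ∫ x in (-(1/2):ℝ)..(-0:ℝ), g x :=
      intervalIntegral.integral_comp_neg g
    simp only [neg_zero] at this
    rw [← this]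
    apply intervalIntegral.integral_congr
    intro x hx
    simp [hg, abs_neg]
  have hhalf : ∫ x in (0:ℝ)..(1/2), g x
      = (2:ℝ)⁻¹ * ∫ u in (0:ℝ)..1, (1-u)^j * u^(n-j) := by
    have e1 : ∫ x in (0:ℝ)..(1/2), g x = ∫ x in (0:ℝ)..(1/2), (1-2*x)^j * (2*x)^(n-j) := by
      apply intervalIntegral.integral_congr
      intro x hx
      rw [Set.uIcc_of_le (by norm_num : (0:ℝ) ≤ 1/2)] at hx
      rw [hg]; simp only
      rw [abs_of_nonneg hx.1]
    rw [e1]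
    have e2 := intervalIntegral.integral_comp_mul_left
      (a := (0:ℝ)) (b := 1/2) (fun u => (1-u)^j * u^(n-j)) (c := 2)
    simp only [mul_zero, mul_one_div, ne_eq, OfNat.ofNat_ne_zero, not_false_iff] at e2
    norm_num at e2
    rw [e2]; norm_num
  rw [hsplit, heven, hhalf]
  have e3 : ∫ u in (0:ℝ)..1, (1-u)^j * u^(n-j) = ∫ u in (0:ℝ)..1, u^(n-j) * (1-u)^j := by
    apply intervalIntegral.integral_congr; intro x _; ring
  rw [e3, beta_nat (n-j) j]
  have : n - j + j + 1 = n + 1 := by omega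
  rw [this]
  ring

end StatementNineAux

open Finset in
/-- Joint law of the rank counts (Lemmas A.1 and A.2 combined): with `Y_i = X_i · B_i`,
`M_R = #{i ∈ {1,…,n} : |X_i| ≥ |X₀|}` and `M_E = #{i ∈ {1,…,n} : |Y_i| ≥ |X₀|}`,
for `0 ≤ k ≤ j ≤ n` we have
`ℙ(M_R = j, M_E = k) = (1/(n+1)) · C(j,k) · (1/2+δ)^k · (1/2-δ)^(j-k)`. -/
theorem statement_9 {n : ℕ} {δ : ℝ} (hδ : δ ∈ Set.Ioo (0 : ℝ) (1 / 2)) :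
    ∀ j k : ℕ, k ≤ j → j ≤ n →
      (Measure.pi fun _ : Fin (n + 1) => lawXB δ)
          {ω | (Finset.univ.filter fun i : Fin n => |(ω 0).1| ≤ |(ω i.succ).1|).card = j ∧
            (Finset.univ.filter fun i : Fin n =>
              |(ω 0).1| ≤ |if (ω i.succ).2 then (ω i.succ).1 else 0|).card = k} =
        ((n : ℝ≥0∞) + 1)⁻¹ * (j.choose k) *
          ENNReal.ofReal (1 / 2 + δ) ^ k * ENNReal.ofReal (1 / 2 - δ) ^ (j - k) := by
  intro j k hkj hjn
  classical
  haveI := lawXB_prob hδ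
  set ν : Measure (Fin n → ℝ × Bool) := Measure.pi fun _ => lawXB δ with hν
  set t : Set ((ℝ × Bool) × (Fin n → ℝ × Bool)) :=
    {p | (univ.filter fun i : Fin n => |p.1.1| ≤ |(p.2 i).1|).card = j ∧
         (univ.filter fun i : Fin n => |p.1.1| ≤ |if (p.2 i).2 then (p.2 i).1 else 0|).card = k}
    with ht
  -- measurability of t
  have hP : ∀ i : Fin n, MeasurableSet
      {p : (ℝ × Bool) × (Fin n → ℝ × Bool) | |p.1.1| ≤ |(p.2 i).1|} := fun i =>
    measurableSet_le measurable_fst.fst.abs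
      (((measurable_pi_apply i).comp measurable_snd).fst.abs)
  have hQ : ∀ i : Fin n, MeasurableSet
      {p : (ℝ × Bool) × (Fin n → ℝ × Bool) | |p.1.1| ≤ |if (p.2 i).2 then (p.2 i).1 else 0|} := by
    intro i
    apply measurableSet_le measurable_fst.fst.abs
    apply Measurable.abs
    exact Measurable.ite
      (((measurable_pi_apply i).comp measurable_snd).snd (measurableSet_singleton true))
      (((measurable_pi_apply i).comp measurable_snd).fst) measurable_const
  have hcount : ∀ (P : Fin n → (ℝ × Bool) × (Fin n → ℝ × Bool) → Prop),
      (∀ i, MeasurableSet {p | P i p}) → Measurable fun p =>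
        (univ.filter fun i : Fin n => P i p).card := by
    intro P hPm
    simp_rw [Finset.card_filter]
    exact Finset.measurable_sum _ fun i _ =>
      Measurable.ite (hPm i) measurable_const measurable_const
  have htm : MeasurableSet t := by
    rw [ht]
    have h1 := (hcount _ hP) (measurableSet_singleton j)
    have h2 := (hcount _ hQ) (measurableSet_singleton k)
    exact h1.inter h2
  -- peel off coordinate 0
  have hpre : {ω : Fin (n+1) → ℝ × Bool |
      (Finset.univ.filter fun i : Fin n => |(ω 0).1| ≤ |(ω i.succ).1|).card = j ∧
      (Finset.univ.filter fun i : Fin n =>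
        |(ω 0).1| ≤ |if (ω i.succ).2 then (ω i.succ).1 else 0|).card = k}
      = (MeasurableEquiv.piFinSuccAbove (fun _ : Fin (n+1) => ℝ × Bool) 0) ⁻¹' t := by
    ext ω
    simp only [ht, Set.mem_preimage, Set.mem_setOf_eq,
      MeasurableEquiv.piFinSuccAbove_apply, Fin.insertNthEquiv_symm_apply, Fin.removeNth,
      Fin.zero_succAbove]
    exact ⟨fun h => by convert h <;> exact Finset.filter_congr (fun _ _ => Iff.rfl),
      fun h => by convert h <;> exact Finset.filter_congr (fun _ _ => Iff.rfl)⟩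
  rw [hpre, (measurePreserving_piFinSuccAbove (fun _ : Fin (n+1) => lawXB δ) 0).measure_preimage
    htm.nullMeasurableSet]
  have hlaw : lawXB δ = (volume.restrict (Set.Icc (-(1 / 2) : ℝ) (1 / 2))).prod (bernHalfPlus δ) :=
    rfl
  rw [Measure.prod_apply htm]
  set E : ℝ → Set (Fin n → ℝ × Bool) := fun x =>
    {ω : Fin n → ℝ × Bool | (univ.filter fun i => |x| ≤ |(ω i).1|).card = j ∧
      (univ.filter fun i => |x| ≤ |if (ω i).2 then (ω i).1 else 0|).card = k} with hE
  have hfmeas : Measurable fun a : ℝ × Bool => ν (Prod.mk a ⁻¹' t) :=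
    measurable_measure_prodMk_left htm
  have step1 : ∫⁻ a, (Measure.pi fun _ : Fin n => lawXB δ) (Prod.mk a ⁻¹' t) ∂(lawXB δ)
      = ∫⁻ a : ℝ × Bool, ν (E a.1) ∂(lawXB δ) := lintegral_congr fun a => rfl
  have step0 : (∫⁻ a, (Measure.pi fun i : Fin n =>
        (fun _ : Fin (n+1) => lawXB δ) ((0 : Fin (n+1)).succAbove i)) (Prod.mk a ⁻¹' t)
        ∂(lawXB δ))
      = ∫⁻ a : ℝ × Bool, ν (E a.1) ∂(lawXB δ) := lintegral_congr fun a => rfl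
  rw [step0]
  have hF : Measurable fun a : ℝ × Bool => ν (E a.1) := hfmeas
  rw [hlaw, MeasureTheory.lintegral_prod _ hF.aemeasurable]
  have step2 : (∫⁻ x, ∫⁻ b, ν (E (x, b).1) ∂(bernHalfPlus δ)
        ∂(volume.restrict (Set.Icc (-(1/2):ℝ) (1/2))))
      = ∫⁻ x, ν (E x) ∂(volume.restrict (Set.Icc (-(1/2):ℝ) (1/2))) := by
    refine lintegral_congr fun x => ?_
    show (∫⁻ _, ν (E x) ∂(bernHalfPlus δ)) = ν (E x)
    rw [lintegral_const, bern_univ hδ, mul_one]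
  rw [step2]
  -- a.e. evaluation
  have h0 : ∀ᵐ x ∂(volume.restrict (Set.Icc (-(1/2):ℝ) (1/2))), x ≠ 0 := by
    rw [ae_iff]
    apply measure_mono_null (fun x hx => by simpa using hx : {x : ℝ | ¬ x ≠ 0} ⊆ {0})
    rw [Measure.restrict_apply (measurableSet_singleton 0)]
    exact measure_mono_null Set.inter_subset_left Real.volume_singleton
  have h3 : ∀ᵐ x ∂(volume.restrict (Set.Icc (-(1/2):ℝ) (1/2))),
      ν (E x) = ((n.choose j : ℝ≥0∞) * (j.choose k) * ENNReal.ofReal (1/2+δ) ^ k *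
        ENNReal.ofReal (1/2-δ) ^ (j-k)) * ENNReal.ofReal ((1-2*|x|)^j * (2*|x|)^(n-j)) := by
    filter_upwards [ae_restrict_mem measurableSet_Icc, h0] with x hx hx0
    rw [hν, hE]
    exact G_eval hδ n j k hkj hjn hx hx0
  rw [lintegral_congr_ae h3]
  have hgm : Measurable fun x : ℝ => ENNReal.ofReal ((1-2*|x|)^j * (2*|x|)^(n-j)) := by
    apply Measurable.ennreal_ofReal
    exact ((measurable_const.sub (continuous_abs.measurable.const_mul 2)).pow_const j).mul
      ((continuous_abs.measurable.const_mul 2).pow_const (n-j))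
  rw [lintegral_const_mul _ hgm, lint_g n j hjn]
  -- final arithmetic
  have hc : (n.choose j : ℝ≥0∞) *
      ENNReal.ofReal ((j.factorial * (n-j).factorial : ℝ) / (n+1).factorial)
      = ((n : ℝ≥0∞) + 1)⁻¹ := by
    rw [show ((n.choose j : ℝ≥0∞)) = ENNReal.ofReal (n.choose j : ℝ) from
      (ENNReal.ofReal_natCast _).symm]
    rw [← ENNReal.ofReal_mul (by positivity)]
    have hval : (n.choose j : ℝ) * ((j.factorial * (n-j).factorial : ℝ) / (n+1).factorial)
        = ((n:ℝ) + 1)⁻¹ := by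
      have key : n.choose j * (j.factorial * (n-j).factorial) = n.factorial := by
        rw [← Nat.choose_mul_factorial_mul_factorial hjn]; ring
      have hfs : ((n+1).factorial : ℝ) = ((n:ℝ)+1) * n.factorial := by
        rw [Nat.factorial_succ]; push_cast; ring
      have hne1 : ((n+1).factorial : ℝ) ≠ 0 := by positivity
      have hne2 : ((n:ℝ)+1) ≠ 0 := by positivity
      field_simp
      rw [hfs]
      push_cast [← key]
      ring
    rw [hval, ENNReal.ofReal_inv_of_pos (by positivity),
      ENNReal.ofReal_add (by positivity) zero_le_one, ENNReal.ofReal_natCast,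
      ENNReal.ofReal_one]
  calc ((n.choose j : ℝ≥0∞) * (j.choose k) * ENNReal.ofReal (1/2+δ) ^ k *
        ENNReal.ofReal (1/2-δ) ^ (j-k)) *
        ENNReal.ofReal ((j.factorial * (n-j).factorial : ℝ) / (n+1).factorial)
      = ((n.choose j : ℝ≥0∞) *
          ENNReal.ofReal ((j.factorial * (n-j).factorial : ℝ) / (n+1).factorial)) *
        ((j.choose k : ℝ≥0∞) * ENNReal.ofReal (1/2+δ) ^ k *
          ENNReal.ofReal (1/2-δ) ^ (j-k)) := by ring
    _ = _ := by rw [hc]; ring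
end

section
/- Let n ≥ 1, let P be a probability distribution on ℝ^d × ℝ, let m be a conditional median function of P, and let (X₁,Y₁), …, (X_{n+1},Y_{n+1}) be i.i.d. with law P. Then ℙ( |m(X_{n+1})| ≤ max_{1 ≤ i ≤ n} |Y_i| ) ≥ 1 − 2/(n+1). -/
open MeasureTheory ProbabilityTheory
open scoped ENNReal NNReal

/-- Any upper set on which the tail measures are all `≤ s` has measure `≤ s`. -/
lemma upperSet_measure_le (μ : Measure ℝ) (A : Set ℝ)
    (hup : ∀ (z z' : ℝ), z ∈ A → z ≤ z' → z' ∈ A)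
    {s : ℝ≥0∞} (hA : ∀ z ∈ A, μ (Set.Ici z) ≤ s) : μ A ≤ s := by
  rcases A.eq_empty_or_nonempty with h | hne
  · simp [h]
  by_cases hbdd : BddBelow A
  · set a := sInf A with ha
    by_cases haA : a ∈ A
    · exact le_trans (measure_mono fun z hz => csInf_le hbdd hz) (hA a haA)
    · have hsub : A ⊆ Set.Ioi a := by
        intro z hz
        rcases eq_or_lt_of_le (csInf_le hbdd hz) with h | h
        · exact absurd (show a ∈ A by rw [ha, h]; exact hz) haA
        · exact h
      have hmem : ∀ k : ℕ, a + 1 / (k + 1) ∈ A := by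
        intro k
        have hpos : a < a + 1 / ((k : ℝ) + 1) := by
          have : (0:ℝ) < 1 / ((k : ℝ) + 1) := by positivity
          linarith
        obtain ⟨z, hzA, hz⟩ := exists_lt_of_csInf_lt hne hpos
        exact hup _ _ hzA hz.le
      have hIoi : Set.Ioi a ⊆ ⋃ k : ℕ, Set.Ici (a + 1 / (k + 1)) := by
        intro x hx
        obtain ⟨k, hk⟩ := exists_nat_one_div_lt (K := ℝ) (sub_pos.mpr hx)
        exact Set.mem_iUnion.2 ⟨k, by simp only [Set.mem_Ici]; push_cast; linarith⟩
      have hmono : Monotone fun k : ℕ => Set.Ici (a + 1 / ((k : ℝ) + 1)) := by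
        intro k k' hk
        refine Set.Ici_subset_Ici.2 ?_
        have h1 : (1:ℝ) / ((k':ℝ) + 1) ≤ 1 / ((k:ℝ) + 1) := by
          apply one_div_le_one_div_of_le (by positivity)
          exact_mod_cast by omega
        linarith
      calc μ A ≤ μ (⋃ k : ℕ, Set.Ici (a + 1 / (k + 1))) :=
            measure_mono (hsub.trans hIoi)
        _ = ⨆ k : ℕ, μ (Set.Ici (a + 1 / (k + 1))) :=
            Directed.measure_iUnion hmono.directed_le
        _ ≤ s := iSup_le fun k => hA _ (hmem k)
  · have hAuniv : A = Set.univ := by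
      ext x
      simp only [Set.mem_univ, iff_true]
      obtain ⟨z, hzA, hz⟩ := (not_bddBelow_iff).1 hbdd x
      exact hup _ _ hzA hz.le
    have huniv : (Set.univ : Set ℝ) ⊆ ⋃ k : ℕ, Set.Ici (-(k : ℝ)) := by
      intro x _
      refine Set.mem_iUnion.2 ⟨⌈-x⌉₊, ?_⟩
      simp only [Set.mem_Ici, neg_le]
      exact Nat.le_ceil _
    have hmono : Monotone fun k : ℕ => Set.Ici (-(k : ℝ)) := by
      intro k k' hk
      refine Set.Ici_subset_Ici.2 (neg_le_neg ?_)
      exact_mod_cast hk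
    calc μ A = μ Set.univ := by rw [hAuniv]
      _ ≤ μ (⋃ k : ℕ, Set.Ici (-(k : ℝ))) := measure_mono huniv
      _ = ⨆ k : ℕ, μ (Set.Ici (-(k : ℝ))) := Directed.measure_iUnion hmono.directed_le
      _ ≤ s := iSup_le fun k => hA _ (hAuniv ▸ Set.mem_univ _)

lemma measure_tail_le (μ : Measure ℝ) [IsProbabilityMeasure μ] (s : ℝ) :
    μ {z | (μ (Set.Ici z)).toReal ≤ s} ≤ ENNReal.ofReal s := by
  have hup : ∀ (z z' : ℝ), z ∈ {z : ℝ | (μ (Set.Ici z)).toReal ≤ s} → z ≤ z' →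
      z' ∈ {z : ℝ | (μ (Set.Ici z)).toReal ≤ s} := by
    intro z z' hz hzz'
    simp only [Set.mem_setOf_eq] at hz ⊢
    refine le_trans ?_ hz
    exact ENNReal.toReal_mono (measure_ne_top μ _)
      (measure_mono (Set.Ici_subset_Ici.2 hzz'))
  have hA : ∀ z ∈ {z : ℝ | (μ (Set.Ici z)).toReal ≤ s}, μ (Set.Ici z) ≤ ENNReal.ofReal s := by
    intro z hz
    simp only [Set.mem_setOf_eq] at hz
    rw [ENNReal.le_ofReal_iff_toReal_le (measure_ne_top μ _)
      (le_trans ENNReal.toReal_nonneg hz)]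
    exact hz
  exact upperSet_measure_le μ _ hup hA

lemma stepC (n : ℕ) (hn : 1 ≤ n) (μ : Measure ℝ) [IsProbabilityMeasure μ] :
    ∫⁻ z, (μ (Set.Iio z) + μ (Set.Ici z) / 2) ^ n ∂μ ≤ ENNReal.ofReal (2 / ((n : ℝ) + 1)) := by
  set H : ℝ → ℝ := fun z => (μ (Set.Ici z)).toReal with hHdef
  have hH0 : ∀ z, 0 ≤ H z := fun z => ENNReal.toReal_nonneg
  have hH1 : ∀ z, H z ≤ 1 := fun z => by
    simpa [hHdef] using ENNReal.toReal_mono (by simp) (prob_le_one (μ := μ) (s := Set.Ici z))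
  set f : ℝ → ℝ := fun z => (1 - H z / 2) ^ n with hfdef
  have hf0 : ∀ z, 0 ≤ f z := fun z => pow_nonneg (by have := hH1 z; linarith) n
  have hHanti : Antitone H := by
    intro z z' hzz'
    exact ENNReal.toReal_mono (measure_ne_top μ _) (measure_mono (Set.Ici_subset_Ici.2 hzz'))
  have hfmeas : Measurable f := by
    have : Measurable H := hHanti.measurable
    fun_prop
  have key : ∀ z, (μ (Set.Iio z) + μ (Set.Ici z) / 2) ^ n = ENNReal.ofReal (f z) := by
    intro z
    have h1 : μ (Set.Iio z) = ENNReal.ofReal (1 - H z) := by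
      have hc : Set.Iio z = (Set.Ici z)ᶜ := by simp
      rw [hc, measure_compl measurableSet_Ici (measure_ne_top μ _), measure_univ,
        ENNReal.ofReal_sub _ (hH0 z), ENNReal.ofReal_one, hHdef,
        ENNReal.ofReal_toReal (measure_ne_top μ _)]
    have h2 : μ (Set.Ici z) / 2 = ENNReal.ofReal (H z / 2) := by
      rw [ENNReal.ofReal_div_of_pos two_pos, hHdef, ENNReal.ofReal_toReal (measure_ne_top μ _)]
      norm_num
    rw [h1, h2, ← ENNReal.ofReal_add (by have := hH1 z; linarith) (by have := hH0 z; linarith),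
      ← ENNReal.ofReal_pow (by have := hH1 z; have := hH0 z; linarith)]
    congr 1
    ring
  rw [lintegral_congr key,
    lintegral_eq_lintegral_meas_le μ (ae_of_all _ hf0) hfmeas.aemeasurable]
  have hnR : (0:ℝ) < (n:ℝ) := by exact_mod_cast hn
  set c : ℝ := 1 / (n : ℝ) with hcdef
  have hc0 : 0 < c := by positivity
  have bound : ∀ t ∈ Set.Ioi (0:ℝ),
      μ {z | t ≤ f z} ≤ ENNReal.ofReal (2 * (1 - t ^ c)) := by
    intro t ht
    refine le_trans (measure_mono ?_) (measure_tail_le μ _)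
    intro z hz
    simp only [Set.mem_setOf_eq] at hz ⊢
    have hb0 : 0 ≤ 1 - H z / 2 := by have := hH1 z; linarith
    have h1 : t ^ c ≤ ((1 - H z / 2) ^ n) ^ c :=
      Real.rpow_le_rpow (le_of_lt ht) hz hc0.le
    have h2 : ((1 - H z / 2) ^ n) ^ c = 1 - H z / 2 := by
      rw [← Real.rpow_natCast (1 - H z / 2) n, ← Real.rpow_mul hb0, hcdef,
        mul_one_div_cancel (ne_of_gt hnR), Real.rpow_one]
    rw [h2] at h1
    linarith
  calc ∫⁻ t in Set.Ioi (0:ℝ), μ {z | t ≤ f z}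
      ≤ ∫⁻ t in Set.Ioi (0:ℝ), ENNReal.ofReal (2 * (1 - t ^ c)) := by
        refine lintegral_mono_ae ?_
        rw [ae_restrict_iff' measurableSet_Ioi]
        exact ae_of_all _ bound
    _ = (∫⁻ t in Set.Ioc (0:ℝ) 1, ENNReal.ofReal (2 * (1 - t ^ c))) +
        ∫⁻ t in Set.Ioi (1:ℝ), ENNReal.ofReal (2 * (1 - t ^ c)) := by
        rw [← lintegral_union measurableSet_Ioi Set.Ioc_disjoint_Ioi_same,
          Set.Ioc_union_Ioi_eq_Ioi zero_le_one]
    _ = ∫⁻ t in Set.Ioc (0:ℝ) 1, ENNReal.ofReal (2 * (1 - t ^ c)) := by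
        have : ∫⁻ t in Set.Ioi (1:ℝ), ENNReal.ofReal (2 * (1 - t ^ c)) = 0 := by
          rw [setLIntegral_congr_fun measurableSet_Ioi
            (fun t (ht : t ∈ Set.Ioi (1:ℝ)) => ?_), lintegral_zero]
          have h1t : 1 ≤ t ^ c := Real.one_le_rpow (le_of_lt ht) hc0.le
          exact ENNReal.ofReal_eq_zero.2 (by nlinarith)
        rw [this, add_zero]
    _ = ENNReal.ofReal (∫ t in Set.Ioc (0:ℝ) 1, 2 * (1 - t ^ c)) := by
        rw [← ofReal_integral_eq_lintegral_ofReal]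
        · have hint : IntervalIntegrable (fun t : ℝ => t ^ c) volume 0 1 :=
            intervalIntegral.intervalIntegrable_rpow (Or.inl hc0.le)
          have : IntegrableOn (fun t : ℝ => t ^ c) (Set.Ioc 0 1) volume := by
            rw [intervalIntegrable_iff, Set.uIoc_of_le zero_le_one] at hint
            exact hint
          have h1 : IntegrableOn (fun _ : ℝ => (1:ℝ)) (Set.Ioc (0:ℝ) 1) volume :=
            integrableOn_const (by simp)
          exact ((h1.sub this).const_mul 2)
        · filter_upwards [ae_restrict_mem measurableSet_Ioc] with t ht
          have : t ^ c ≤ 1 := Real.rpow_le_one (le_of_lt ht.1) ht.2 hc0.le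
          simp only [Pi.zero_apply]
          nlinarith
    _ ≤ ENNReal.ofReal (2 / ((n : ℝ) + 1)) := by
        refine ENNReal.ofReal_le_ofReal (le_of_eq ?_)
        rw [← intervalIntegral.integral_of_le zero_le_one]
        have hint : IntervalIntegrable (fun t : ℝ => t ^ c) volume 0 1 :=
          intervalIntegral.intervalIntegrable_rpow (Or.inl hc0.le)
        rw [intervalIntegral.integral_const_mul]
        rw [intervalIntegral.integral_sub intervalIntegrable_const hint]
        rw [integral_rpow (Or.inl (by linarith))]
        rw [Real.one_rpow, Real.zero_rpow (by positivity)]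
        simp only [intervalIntegral.integral_const, smul_eq_mul, sub_zero, mul_one]
        rw [hcdef]
        field_simp
        ring

/-- Second lemma in the proof of Theorem 2.4 (Appendix A.4): for i.i.d.
`(X₁,Y₁), …, (X_{n+1},Y_{n+1})` with law `P` and `m` a conditional median function of `P`,
`ℙ(|m(X_{n+1})| ≤ max_{1 ≤ i ≤ n} |Y_i|) ≥ 1 - 2/(n+1)`. -/
theorem statement_11 {d n : ℕ} (hd : 1 ≤ d) (hn : 1 ≤ n)
    (P : Measure ((Fin d → ℝ) × ℝ)) [IsProbabilityMeasure P]
    (m : (Fin d → ℝ) → ℝ) (hm : IsCondMedian P m) :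
    ENNReal.ofReal (1 - 2 / ((n : ℝ) + 1)) ≤
      (Measure.pi fun _ : Fin (n + 1) => P)
        {ω | |m (ω (Fin.last n)).1| ≤
          Finset.univ.sup' (Finset.univ_nonempty_iff.mpr ⟨⟨0, hn⟩⟩)
            fun i : Fin n => |(ω i.castSucc).2|} := by
  obtain ⟨hmmeas, hmed⟩ := hm
  have hc : Measurable fun p : (Fin d → ℝ) × ℝ => |m p.1| := (hmmeas.comp measurable_fst).abs
  set Q := Measure.pi fun _ : Fin (n + 1) => P with hQdef
  set C : Set (Fin (n + 1) → (Fin d → ℝ) × ℝ) :=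
    {ω | ∀ i : Fin n, |(ω i.castSucc).2| < |m (ω (Fin.last n)).1|} with hCdef
  have hCmeas : MeasurableSet C := by
    have : C = ⋂ i : Fin n, {ω : Fin (n + 1) → (Fin d → ℝ) × ℝ |
        |(ω i.castSucc).2| < |m (ω (Fin.last n)).1|} := by
      ext ω; simp [hCdef]
    rw [this]
    refine MeasurableSet.iInter fun i => measurableSet_lt ?_ ?_
    · exact (measurable_pi_apply i.castSucc).snd.abs
    · exact (hmmeas.comp (measurable_pi_apply (Fin.last n)).fst).abs
  -- Step B : kernel bound
  have hB : ∀ t : ℝ, P {q : (Fin d → ℝ) × ℝ | |q.2| < t}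
      ≤ P {q : (Fin d → ℝ) × ℝ | |m q.1| < t}
        + P {q : (Fin d → ℝ) × ℝ | t ≤ |m q.1|} / 2 := by
    intro t
    have hVmeas : MeasurableSet {q : (Fin d → ℝ) × ℝ | |m q.1| < t} :=
      measurableSet_lt hc measurable_const
    have hWmeas : MeasurableSet {q : (Fin d → ℝ) × ℝ | t ≤ |m q.1|} :=
      measurableSet_le measurable_const hc
    have hBmeas : MeasurableSet {q : (Fin d → ℝ) × ℝ | |q.2| < t ∧ t ≤ |m q.1|} :=
      (measurableSet_lt measurable_snd.abs measurable_const).inter hWmeas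
    have key2 : P {q : (Fin d → ℝ) × ℝ | |q.2| < t ∧ t ≤ |m q.1|}
        ≤ P {q : (Fin d → ℝ) × ℝ | t ≤ |m q.1|} / 2 := by
      have hxset : MeasurableSet {x : Fin d → ℝ | t ≤ |m x|} :=
        measurableSet_le measurable_const hmmeas.abs
      have hPB : P {q : (Fin d → ℝ) × ℝ | |q.2| < t ∧ t ≤ |m q.1|}
          = ∫⁻ x, P.condKernel x
              (Prod.mk x ⁻¹' {q : (Fin d → ℝ) × ℝ | |q.2| < t ∧ t ≤ |m q.1|}) ∂P.fst := by
        conv_lhs => rw [← P.disintegrate P.condKernel]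
        rw [Measure.compProd_apply hBmeas]
      have hae : ∀ᵐ x ∂P.fst, P.condKernel x
          (Prod.mk x ⁻¹' {q : (Fin d → ℝ) × ℝ | |q.2| < t ∧ t ≤ |m q.1|})
          ≤ Set.indicator {x : Fin d → ℝ | t ≤ |m x|} (fun _ => 2⁻¹) x := by
        filter_upwards [hmed] with x hx
        rw [one_div] at hx
        by_cases hxt : t ≤ |m x|
        · have hsub : Prod.mk x ⁻¹' {q : (Fin d → ℝ) × ℝ | |q.2| < t ∧ t ≤ |m q.1|}
              ⊆ {y : ℝ | |y| < |m x|} := fun y hy => lt_of_lt_of_le hy.1 hxt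
          rw [Set.indicator_of_mem (show x ∈ {x : Fin d → ℝ | t ≤ |m x|} from hxt)]
          refine le_trans (measure_mono hsub) ?_
          have hSmeas : MeasurableSet {y : ℝ | |y| < |m x|} :=
            measurableSet_lt measurable_abs measurable_const
          rcases le_or_gt 0 (m x) with hmx | hmx
          · have hd : Disjoint {y : ℝ | |y| < |m x|} (Set.Ici (m x)) := by
              rw [Set.disjoint_left]
              intro y hy hy'
              simp only [Set.mem_setOf_eq, abs_of_nonneg hmx] at hy
              exact absurd hy' (not_le.2 (lt_of_le_of_lt (le_abs_self y) hy))
            have hun : P.condKernel x {y : ℝ | |y| < |m x|} + 2⁻¹ ≤ 2⁻¹ + 2⁻¹ := by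
              calc P.condKernel x {y : ℝ | |y| < |m x|} + 2⁻¹
                  ≤ P.condKernel x {y : ℝ | |y| < |m x|}
                    + P.condKernel x (Set.Ici (m x)) := add_le_add_right hx.2 _
                _ = P.condKernel x ({y : ℝ | |y| < |m x|} ∪ Set.Ici (m x)) :=
                    (measure_union hd measurableSet_Ici).symm
                _ ≤ P.condKernel x Set.univ := measure_mono (Set.subset_univ _)
                _ = 1 := measure_univ
                _ = 2⁻¹ + 2⁻¹ := ENNReal.inv_two_add_inv_two.symm
            exact ENNReal.le_of_add_le_add_right (by simp) hun
          · have hd : Disjoint {y : ℝ | |y| < |m x|} (Set.Iic (m x)) := by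
              rw [Set.disjoint_left]
              intro y hy hy'
              simp only [Set.mem_setOf_eq, abs_of_neg hmx] at hy
              simp only [Set.mem_Iic] at hy'
              have : -y ≤ |y| := neg_le_abs y
              linarith
            have hun : P.condKernel x {y : ℝ | |y| < |m x|} + 2⁻¹ ≤ 2⁻¹ + 2⁻¹ := by
              calc P.condKernel x {y : ℝ | |y| < |m x|} + 2⁻¹
                  ≤ P.condKernel x {y : ℝ | |y| < |m x|}
                    + P.condKernel x (Set.Iic (m x)) := add_le_add_right hx.1 _
                _ = P.condKernel x ({y : ℝ | |y| < |m x|} ∪ Set.Iic (m x)) :=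
                    (measure_union hd measurableSet_Iic).symm
                _ ≤ P.condKernel x Set.univ := measure_mono (Set.subset_univ _)
                _ = 1 := measure_univ
                _ = 2⁻¹ + 2⁻¹ := ENNReal.inv_two_add_inv_two.symm
            exact ENNReal.le_of_add_le_add_right (by simp) hun
        · have : Prod.mk x ⁻¹' {q : (Fin d → ℝ) × ℝ | |q.2| < t ∧ t ≤ |m q.1|} = ∅ := by
            ext y; simp only [Set.mem_preimage, Set.mem_setOf_eq, Set.mem_empty_iff_false,
              iff_false, not_and]
            exact fun _ => hxt
          rw [this, measure_empty]
          exact zero_le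
      calc P {q : (Fin d → ℝ) × ℝ | |q.2| < t ∧ t ≤ |m q.1|}
          = ∫⁻ x, P.condKernel x
              (Prod.mk x ⁻¹' {q : (Fin d → ℝ) × ℝ | |q.2| < t ∧ t ≤ |m q.1|}) ∂P.fst := hPB
        _ ≤ ∫⁻ x, Set.indicator {x : Fin d → ℝ | t ≤ |m x|} (fun _ => 2⁻¹) x ∂P.fst :=
            lintegral_mono_ae hae
        _ = 2⁻¹ * P.fst {x : Fin d → ℝ | t ≤ |m x|} := by
            rw [lintegral_indicator_const hxset]
        _ = P {q : (Fin d → ℝ) × ℝ | t ≤ |m q.1|} / 2 := by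
            rw [Measure.fst_apply hxset]
            have hpre' : Prod.fst ⁻¹' {x : Fin d → ℝ | t ≤ |m x|}
                = {q : (Fin d → ℝ) × ℝ | t ≤ |m q.1|} := rfl
            rw [hpre', div_eq_mul_inv, mul_comm]
    calc P {q : (Fin d → ℝ) × ℝ | |q.2| < t}
        ≤ P ({q : (Fin d → ℝ) × ℝ | |q.2| < t} ∩ {q : (Fin d → ℝ) × ℝ | |m q.1| < t})
          + P ({q : (Fin d → ℝ) × ℝ | |q.2| < t} \ {q : (Fin d → ℝ) × ℝ | |m q.1| < t}) :=
          measure_le_inter_add_diff P _ _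
      _ ≤ P {q : (Fin d → ℝ) × ℝ | |m q.1| < t}
          + P {q : (Fin d → ℝ) × ℝ | t ≤ |m q.1|} / 2 := by
          refine add_le_add (measure_mono Set.inter_subset_right) ?_
          refine le_trans (measure_mono ?_) key2
          intro q hq
          exact ⟨hq.1, not_lt.1 hq.2⟩
  -- Step A : product structure
  have hTmeas : MeasurableSet {q : ((Fin d → ℝ) × ℝ) × (Fin n → (Fin d → ℝ) × ℝ) |
      ∀ i : Fin n, |(q.2 i).2| < |m q.1.1|} := by
    have : {q : ((Fin d → ℝ) × ℝ) × (Fin n → (Fin d → ℝ) × ℝ) |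
        ∀ i : Fin n, |(q.2 i).2| < |m q.1.1|}
        = ⋂ i : Fin n, {q : ((Fin d → ℝ) × ℝ) × (Fin n → (Fin d → ℝ) × ℝ) |
            |(q.2 i).2| < |m q.1.1|} := by
      ext q; simp
    rw [this]
    refine MeasurableSet.iInter fun i => measurableSet_lt ?_ ?_
    · exact ((measurable_pi_apply i).comp measurable_snd).snd.abs
    · exact (hmmeas.comp measurable_fst.fst).abs
  have hA : Q C = ∫⁻ p, (P {q : (Fin d → ℝ) × ℝ | |q.2| < |m p.1|}) ^ n ∂P := by
    have hmp := measurePreserving_piFinSuccAbove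
      (fun _ : Fin (n + 1) => P) (Fin.last n)
    have hpre : (MeasurableEquiv.piFinSuccAbove
        (fun _ : Fin (n + 1) => (Fin d → ℝ) × ℝ) (Fin.last n)) ⁻¹'
        {q : ((Fin d → ℝ) × ℝ) × (Fin n → (Fin d → ℝ) × ℝ) |
          ∀ i : Fin n, |(q.2 i).2| < |m q.1.1|} = C := by
      ext ω
      simp [MeasurableEquiv.piFinSuccAbove, Fin.insertNthEquiv, Fin.removeNth,
        Fin.succAbove_last, Fin.init, hCdef]
    haveI : SFinite (Measure.pi fun _ : Fin n => P) := by
      have : SigmaFinite (Measure.pi fun _ : Fin n => P) := inferInstance; infer_instance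
    rw [hQdef, ← hpre, hmp.measure_preimage hTmeas.nullMeasurableSet,
      Measure.prod_apply hTmeas]
    refine lintegral_congr fun p => ?_
    have hsec : (Prod.mk p ⁻¹' {q : ((Fin d → ℝ) × ℝ) × (Fin n → (Fin d → ℝ) × ℝ) |
        ∀ i : Fin n, |(q.2 i).2| < |m q.1.1|})
        = Set.pi Set.univ (fun _ : Fin n => {q : (Fin d → ℝ) × ℝ | |q.2| < |m p.1|}) := by
      ext ω'; simp [Set.mem_pi]
    rw [hsec, Measure.pi_pi]
    simp [Finset.prod_const]
  -- change of variables and Step C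
  set ν := P.map (fun q : (Fin d → ℝ) × ℝ => |m q.1|) with hνdef
  have hνprob : IsProbabilityMeasure ν := Measure.isProbabilityMeasure_map hc.aemeasurable
  have hL : ∀ t : ℝ, P {q : (Fin d → ℝ) × ℝ | |m q.1| < t} = ν (Set.Iio t) := fun t => by
    rw [hνdef, Measure.map_apply hc measurableSet_Iio]; rfl
  have hG : ∀ t : ℝ, P {q : (Fin d → ℝ) × ℝ | t ≤ |m q.1|} = ν (Set.Ici t) := fun t => by
    rw [hνdef, Measure.map_apply hc measurableSet_Ici]; rfl
  have hg : Measurable fun z : ℝ => (ν (Set.Iio z) + ν (Set.Ici z) / 2) ^ n := by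
    have h1 : Monotone fun z : ℝ => ν (Set.Iio z) := fun a b hab =>
      measure_mono (Set.Iio_subset_Iio hab)
    have h2 : Antitone fun z : ℝ => ν (Set.Ici z) := fun a b hab =>
      measure_mono (Set.Ici_subset_Ici.2 hab)
    exact ((h1.measurable).add ((h2.measurable).div_const 2)).pow_const n
  have hQC : Q C ≤ ENNReal.ofReal (2 / ((n : ℝ) + 1)) := by
    rw [hA]
    calc ∫⁻ p, (P {q : (Fin d → ℝ) × ℝ | |q.2| < |m p.1|}) ^ n ∂P
        ≤ ∫⁻ p, (ν (Set.Iio (|m p.1|)) + ν (Set.Ici (|m p.1|)) / 2) ^ n ∂P := by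
          refine lintegral_mono fun p => ?_
          rw [← hL, ← hG]
          exact pow_le_pow_left' (hB _) n
      _ = ∫⁻ z, (ν (Set.Iio z) + ν (Set.Ici z) / 2) ^ n ∂ν := (lintegral_map hg hc).symm
      _ ≤ ENNReal.ofReal (2 / ((n : ℝ) + 1)) := stepC n hn ν
  -- assembly
  have hset : {ω : Fin (n + 1) → (Fin d → ℝ) × ℝ | |m (ω (Fin.last n)).1| ≤
      Finset.univ.sup' (Finset.univ_nonempty_iff.mpr ⟨⟨0, hn⟩⟩)
        fun i : Fin n => |(ω i.castSucc).2|} = Cᶜ := by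
    ext ω
    simp [hCdef, Finset.le_sup'_iff, not_forall, not_lt]
  rw [hset]
  have h2le : (2 : ℝ) / ((n : ℝ) + 1) ≤ 1 := by
    rw [div_le_one (by positivity)]
    have : (1:ℝ) ≤ (n:ℝ) := by exact_mod_cast hn
    linarith
  calc ENNReal.ofReal (1 - 2 / ((n : ℝ) + 1))
      = 1 - ENNReal.ofReal (2 / ((n : ℝ) + 1)) := by
        rw [ENNReal.ofReal_sub _ (by positivity), ENNReal.ofReal_one]
    _ ≤ 1 - Q C := tsub_le_tsub_left hQC 1
    _ = Q Cᶜ := (prob_compl_eq_one_sub hCmeas).symm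
end

section
/- Let n ≥ 0 and let R₁, …, R_n, R_{n+1} be i.i.d. real-valued random variables. Then for every natural number m, ℙ( #{ i ∈ {1,…,n} : R_i ≥ R_{n+1} } ≥ m ) ≥ 1 − m/(n+1). -/
open MeasureTheory ProbabilityTheory
open scoped ENNReal NNReal

noncomputable def cntMC {N : ℕ} (j : Fin N) (ω : Fin N → ℝ) : ℕ :=
  ((Finset.univ.erase j).filter fun i => ω j ≤ ω i).card

lemma cntMC_meas {N : ℕ} (j : Fin N) : Measurable fun ω : Fin N → ℝ => cntMC j ω := by
  have heq : (fun ω : Fin N → ℝ => cntMC j ω) =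
      fun ω => ∑ i ∈ Finset.univ.erase j, if ω j ≤ ω i then 1 else 0 := by
    funext ω
    rw [cntMC, Finset.card_filter]
  rw [heq]
  refine Finset.measurable_sum _ fun i _ => ?_
  exact Measurable.ite (measurableSet_le (measurable_pi_apply j) (measurable_pi_apply i))
    measurable_const measurable_const

lemma card_bad_le {N : ℕ} (ω : Fin N → ℝ) (m : ℕ) :
    (Finset.univ.filter fun j : Fin N => cntMC j ω < m).card ≤ m := by
  by_contra h
  push_neg at h
  set S := Finset.univ.filter fun j : Fin N => cntMC j ω < m with hSdef
  have hS : S.Nonempty := Finset.card_pos.mp (by omega)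
  obtain ⟨j, hjS, hmin⟩ := S.exists_min_image ω hS
  have hj : cntMC j ω < m := (Finset.mem_filter.mp hjS).2
  have hsub : S.erase j ⊆ (Finset.univ.erase j).filter fun i => ω j ≤ ω i := by
    intro i hi
    obtain ⟨hne, hiS⟩ := Finset.mem_erase.mp hi
    exact Finset.mem_filter.mpr ⟨Finset.mem_erase.mpr ⟨hne, Finset.mem_univ i⟩, hmin i hiS⟩
  have h2 := Finset.card_le_card hsub
  rw [Finset.card_erase_of_mem hjS] at h2
  have : S.card - 1 ≤ cntMC j ω := h2
  omega

lemma cntMC_swap {N : ℕ} (j k : Fin N) (ω : Fin N → ℝ) :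
    cntMC j (ω ∘ Equiv.swap j k) = cntMC k ω := by
  unfold cntMC
  refine Finset.card_equiv (Equiv.swap j k) fun i => ?_
  simp only [Finset.mem_filter, Finset.mem_erase, Finset.mem_univ, and_true,
    Function.comp_apply, Equiv.swap_apply_left]
  constructor
  · rintro ⟨hij, hle⟩
    refine ⟨fun hh => hij ?_, hle⟩
    have := (Equiv.swap j k).injective (a₁ := i) (a₂ := j)
      (by rw [hh, Equiv.swap_apply_left])
    exact this
  · rintro ⟨hik, hle⟩
    refine ⟨fun hh => hik (by rw [hh, Equiv.swap_apply_left]), hle⟩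

lemma cntMC_last {n : ℕ} (ω : Fin (n + 1) → ℝ) :
    (Finset.univ.filter fun i : Fin n => ω (Fin.last n) ≤ ω i.castSucc).card
      = cntMC (Fin.last n) ω := by
  unfold cntMC
  refine Finset.card_bij' (fun i _ => Fin.castSucc i)
    (fun b hb => b.castPred ?_) ?_ ?_ ?_ ?_
  · exact (Finset.mem_erase.mp (Finset.mem_filter.mp hb).1).1
  · intro a ha
    refine Finset.mem_filter.mpr ⟨Finset.mem_erase.mpr
      ⟨(Fin.castSucc_lt_last a).ne, Finset.mem_univ _⟩, (Finset.mem_filter.mp ha).2⟩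
  · intro b hb
    refine Finset.mem_filter.mpr ⟨Finset.mem_univ _, ?_⟩
    have := (Finset.mem_filter.mp hb).2
    simpa [Fin.castSucc_castPred] using this
  · intro a ha; simp
  · intro b hb; simp [Fin.castSucc_castPred]

/-- Median Comparison Lemma (appendix, alternate proof of Theorem 2.1): for i.i.d.
`R₁, …, R_{n+1}`, `ℙ(#{i ∈ {1,…,n} : R_i ≥ R_{n+1}} ≥ m) ≥ 1 - m/(n+1)`.  Here
`R_i = ω i` on the canonical product space, the last value being `ω (Fin.last n)`. -/
theorem statement_13 {n : ℕ} (P : Measure ℝ) [IsProbabilityMeasure P] (m : ℕ) :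
    ENNReal.ofReal (1 - (m : ℝ) / ((n : ℝ) + 1)) ≤
      (Measure.pi fun _ : Fin (n + 1) => P)
        {ω | m ≤ (Finset.univ.filter
          fun i : Fin n => ω (Fin.last n) ≤ ω i.castSucc).card} := by
  classical
  set μ : Measure (Fin (n + 1) → ℝ) := Measure.pi fun _ => P with hμ
  set B : Fin (n + 1) → Set (Fin (n + 1) → ℝ) := fun j => {ω | cntMC j ω < m} with hB
  have hBmeas : ∀ j, MeasurableSet (B j) := fun j =>
    cntMC_meas j (MeasurableSet.of_discrete (s := Set.Iio m))
  -- symmetry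
  have hsym : ∀ j, μ (B j) = μ (B (Fin.last n)) := by
    intro j
    set e := Equiv.swap j (Fin.last n) with he
    have hmp := measurePreserving_piCongrLeft (fun _ : Fin (n + 1) => P) e
    have hTapp : ∀ ω : Fin (n + 1) → ℝ,
        (MeasurableEquiv.piCongrLeft (fun _ : Fin (n + 1) => ℝ) e) ω = ω ∘ e := by
      intro ω; funext i
      have h1 := MeasurableEquiv.piCongrLeft_apply_apply (β := fun _ : Fin (n+1) => ℝ) e ω (e.symm i)
      simpa [he, Equiv.symm_swap, Equiv.swap_apply_self] using h1
    have hpre : (MeasurableEquiv.piCongrLeft (fun _ : Fin (n + 1) => ℝ) e) ⁻¹' (B j)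
        = B (Fin.last n) := by
      ext ω
      simp only [Set.mem_preimage, hB, Set.mem_setOf_eq, hTapp, he, cntMC_swap]
      rw [← he, hTapp, he, cntMC_swap]
    have := hmp.measure_preimage (hBmeas j).nullMeasurableSet
    rw [hpre] at this
    exact this.symm
  -- sum bound
  have hsum : ∑ j : Fin (n + 1), μ (B j) ≤ (m : ℝ≥0∞) := by
    have h1 : ∀ j : Fin (n + 1), μ (B j) = ∫⁻ ω, (B j).indicator 1 ω ∂μ := fun j =>
      (lintegral_indicator_one (hBmeas j)).symm
    calc ∑ j : Fin (n + 1), μ (B j)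
        = ∫⁻ ω, ∑ j : Fin (n + 1), (B j).indicator 1 ω ∂μ := by
          rw [lintegral_finset_sum]
          · exact Finset.sum_congr rfl fun j _ => h1 j
          · exact fun j _ => measurable_one.indicator (hBmeas j)
      _ ≤ ∫⁻ _, (m : ℝ≥0∞) ∂μ := by
          refine lintegral_mono fun ω => ?_
          have : ∑ j : Fin (n + 1), (B j).indicator (1 : (Fin (n+1) → ℝ) → ℝ≥0∞) ω
              = ((Finset.univ.filter fun j : Fin (n + 1) => cntMC j ω < m).card : ℝ≥0∞) := by
            simp only [Set.indicator_apply, hB, Set.mem_setOf_eq, Pi.one_apply]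
            rw [Finset.sum_boole]
          rw [this]
          exact (Nat.cast_le (α := ℝ≥0∞)).mpr (card_bad_le ω m)
      _ = (m : ℝ≥0∞) := by simp
  have hcount : (↑(n + 1) : ℝ≥0∞) * μ (B (Fin.last n)) ≤ (m : ℝ≥0∞) := by
    calc (↑(n + 1) : ℝ≥0∞) * μ (B (Fin.last n))
        = ∑ _j : Fin (n + 1), μ (B (Fin.last n)) := by
          simp [Finset.sum_const, mul_comm]
      _ = ∑ j : Fin (n + 1), μ (B j) := by
          exact Finset.sum_congr rfl fun j _ => (hsym j).symm
      _ ≤ (m : ℝ≥0∞) := hsum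
  have hdiv : μ (B (Fin.last n)) ≤ (m : ℝ≥0∞) / (↑(n + 1) : ℝ≥0∞) := by
    rw [ENNReal.le_div_iff_mul_le (Or.inl (by exact_mod_cast Nat.succ_ne_zero n))
      (Or.inl (ENNReal.natCast_ne_top _))]
    rw [mul_comm]
    exact hcount
  -- identify target set as complement
  have hset : {ω : Fin (n + 1) → ℝ | m ≤ (Finset.univ.filter
      fun i : Fin n => ω (Fin.last n) ≤ ω i.castSucc).card} = (B (Fin.last n))ᶜ := by
    ext ω
    simp only [Set.mem_setOf_eq, Set.mem_compl_iff, hB, cntMC_last, not_lt]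
  rw [hset, prob_compl_eq_one_sub (hBmeas (Fin.last n))]
  have hofr : ENNReal.ofReal ((m : ℝ) / ((n : ℝ) + 1)) = (m : ℝ≥0∞) / (↑(n + 1) : ℝ≥0∞) := by
    rw [ENNReal.ofReal_div_of_pos (by positivity)]
    norm_num [ENNReal.ofReal_natCast, ENNReal.ofReal_add]
  calc ENNReal.ofReal (1 - (m : ℝ) / ((n : ℝ) + 1))
      = 1 - ENNReal.ofReal ((m : ℝ) / ((n : ℝ) + 1)) := by
        rw [ENNReal.ofReal_sub _ (by positivity), ENNReal.ofReal_one]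
    _ ≤ 1 - μ (B (Fin.last n)) := by
        rw [hofr]; exact tsub_le_tsub_left hdiv 1
end

section
/- For all natural numbers n and m, (1/(n+1)) · Σ_{j=0}^{n} Σ_{k=m}^{j} C(j,k) · 2^{−j} ≥ 1 − 2m/(n+1), where C(j,k) denotes the binomial coefficient and the inner sum is empty (equal to zero) when m > j. -/
lemma pascal_sum (N k : ℕ) :
    ∑ i ∈ Finset.range (k+1), ((N+1).choose i : ℝ)
      = 2 * ∑ i ∈ Finset.range (k+1), (N.choose i : ℝ) - (N.choose k : ℝ) := by
  induction k with
  | zero => simp; norm_num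
  | succ k ihk =>
    rw [Finset.sum_range_succ, ihk, Finset.sum_range_succ (f := fun i => (N.choose i : ℝ)) (n := k+1)]
    have hc : (((N+1).choose (k+1)) : ℝ) = (N.choose k : ℝ) + (N.choose (k+1) : ℝ) := by
      exact_mod_cast congrArg (Nat.cast : ℕ → ℝ) (Nat.choose_succ_succ N k)
    rw [hc]
    ring

lemma geom_choose (k N : ℕ) :
    ∑ j ∈ Finset.range N, (j.choose k : ℝ) * (1/2)^j
      = 2 - 2 * (1/2)^N * ∑ i ∈ Finset.range (k+1), (N.choose i : ℝ) := by
  induction N with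
  | zero =>
    simp [Finset.sum_range_succ']
  | succ N ih =>
    rw [Finset.sum_range_succ, ih, pascal_sum]
    ring

lemma inner_tail (m j : ℕ) :
    ∑ k ∈ Finset.Icc m j, (j.choose k : ℝ) * (1/2)^j
      = 1 - ∑ k ∈ Finset.range m, (j.choose k : ℝ) * (1/2)^j := by
  have hfull : ∑ k ∈ Finset.range (j+1), (j.choose k : ℝ) * (1/2)^j = 1 := by
    rw [← Finset.sum_mul, ← Nat.cast_sum, Nat.sum_range_choose]
    push_cast
    rw [← mul_pow]
    norm_num
  rcases le_or_gt m j with hm | hm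
  · have h : ∑ k ∈ Finset.range m, (j.choose k : ℝ) * (1/2)^j
        + ∑ k ∈ Finset.Ico m (j+1), (j.choose k : ℝ) * (1/2)^j
        = ∑ k ∈ Finset.range (j+1), (j.choose k : ℝ) * (1/2)^j := by
      rw [Finset.range_eq_Ico, Finset.range_eq_Ico]
      exact Finset.sum_Ico_consecutive (fun k => (j.choose k : ℝ) * (1/2)^j) (Nat.zero_le m) (show m ≤ j + 1 by omega)
    rw [← Finset.Ico_add_one_right_eq_Icc]
    have hgoal : ∑ k ∈ Finset.Ico m (j+1), (j.choose k : ℝ) * (1/2)^j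
        = 1 - ∑ k ∈ Finset.range m, (j.choose k : ℝ) * (1/2)^j := by
      linarith [h, hfull]
    exact hgoal
  · rw [Finset.Icc_eq_empty (by omega), Finset.sum_empty]
    have h : ∑ k ∈ Finset.range m, (j.choose k : ℝ) * (1/2)^j
        = ∑ k ∈ Finset.range (j+1), (j.choose k : ℝ) * (1/2)^j := by
      symm
      apply Finset.sum_subset (Finset.range_subset_range.mpr (by omega))
      intro x _ hx
      simp only [Finset.mem_range] at hx
      rw [Nat.choose_eq_zero_of_lt (by omega)]
      simp
    rw [h, hfull]
    ring

/-- Key computation in the alternate proof of Theorem 2.1: averaging the binomial tail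
probabilities `ℙ(Binomial(j, 1/2) ≥ m)` over `j` uniform on `{0, …, n}` is at least
`1 - 2m/(n+1)`. -/
theorem statement_16 (n m : ℕ) :
    1 - 2 * (m : ℝ) / ((n : ℝ) + 1) ≤
      ((n : ℝ) + 1)⁻¹ * ∑ j ∈ Finset.range (n + 1), ∑ k ∈ Finset.Icc m j,
        (j.choose k : ℝ) * (1 / 2) ^ j := by
  have hS : ((n:ℝ)+1) - 2*m ≤ ∑ j ∈ Finset.range (n + 1), ∑ k ∈ Finset.Icc m j,
      (j.choose k : ℝ) * (1 / 2) ^ j := by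
    simp_rw [inner_tail]
    rw [Finset.sum_sub_distrib, Finset.sum_const, Finset.card_range, Finset.sum_comm]
    have hb : ∑ k ∈ Finset.range m, ∑ j ∈ Finset.range (n+1), (j.choose k:ℝ)*(1/2)^j
        ≤ ∑ k ∈ Finset.range m, (2:ℝ) := by
      refine Finset.sum_le_sum fun k _ => ?_
      rw [geom_choose]
      have h0 : 0 ≤ 2*(1/2:ℝ)^(n+1) * ∑ i ∈ Finset.range (k+1), ((n+1).choose i : ℝ) := by
        positivity
      linarith
    rw [Finset.sum_const, Finset.card_range] at hb
    simp only [nsmul_eq_mul] at hb ⊢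
    push_cast
    linarith
  have hpos : (0:ℝ) < (n:ℝ) + 1 := by positivity
  have h2 := mul_le_mul_of_nonneg_left hS (le_of_lt (inv_pos.mpr hpos))
  calc 1 - 2 * (m : ℝ) / ((n : ℝ) + 1) = ((n:ℝ)+1)⁻¹ * (((n:ℝ)+1) - 2*m) := by
        field_simp
    _ ≤ _ := h2
end

section
/- For every q ∈ (0,1) and all natural numbers n and m, (1/(n+1)) · Σ_{j=0}^{n} Σ_{k=m}^{j} C(j,k) · (1−q)^k · q^{j−k} ≥ 1 − (1/(1−q)) · m/(n+1), where C(j,k) denotes the binomial coefficient and the inner sum is empty (equal to zero) when m > j. -/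
open Finset

/-- Reindexing: drop the zero terms `j < k`. -/
lemma aux_reindex {q : ℝ} (k : ℕ) : ∀ N : ℕ,
    ∑ j ∈ Finset.range N, (j.choose k : ℝ) * q ^ (j - k) =
      ∑ i ∈ Finset.range (N - k), ((i + k).choose k : ℝ) * q ^ i := by
  intro N
  induction N with
  | zero => simp
  | succ N ih =>
    rw [Finset.sum_range_succ, ih]
    rcases lt_or_ge N k with h | h
    · have h1 : N + 1 - k = 0 := by omega
      have h2 : N - k = 0 := by omega
      simp [h1, h2, Nat.choose_eq_zero_of_lt h]
    · have h1 : N + 1 - k = (N - k) + 1 := by omega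
      rw [h1, Finset.sum_range_succ, show N - k + k = N by omega]

lemma aux_geom_bound {q : ℝ} (hq : q ∈ Set.Ioo (0 : ℝ) 1) (k N : ℕ) :
    ∑ j ∈ Finset.range N, (j.choose k : ℝ) * q ^ (j - k) ≤ 1 / (1 - q) ^ (k + 1) := by
  rw [aux_reindex]
  have hq1 : ‖q‖ < 1 := by rw [Real.norm_eq_abs, abs_lt]; constructor <;> linarith [hq.1, hq.2]
  have hq0 : (0 : ℝ) ≤ q := le_of_lt hq.1
  calc ∑ i ∈ Finset.range (N - k), ((i + k).choose k : ℝ) * q ^ i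
      ≤ ∑' i : ℕ, ((i + k).choose k : ℝ) * q ^ i := by
        apply Summable.sum_le_tsum _ (fun i _ => by positivity)
        exact summable_choose_mul_geometric_of_norm_lt_one k hq1
    _ = 1 / (1 - q) ^ (k + 1) := tsum_choose_mul_geometric_of_norm_lt_one k hq1

/-- Key computation in the alternate proof of Theorem 2.2: averaging the binomial tail
probabilities `ℙ(Binomial(j, 1-q) ≥ m)` over `j` uniform on `{0, …, n}` is at least
`1 - m/((1-q)(n+1))`. -/
theorem statement_17 {q : ℝ} (hq : q ∈ Set.Ioo (0 : ℝ) 1) (n m : ℕ) :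
    1 - (1 / (1 - q)) * ((m : ℝ) / ((n : ℝ) + 1)) ≤
      ((n : ℝ) + 1)⁻¹ * ∑ j ∈ Finset.range (n + 1), ∑ k ∈ Finset.Icc m j,
        (j.choose k : ℝ) * (1 - q) ^ k * q ^ (j - k) := by
  obtain ⟨hq0, hq1⟩ := hq
  have hp : (0 : ℝ) < 1 - q := by linarith
  set p : ℝ := 1 - q with hpdef
  have inner_ge : ∀ j : ℕ,
      1 - ∑ k ∈ Finset.range m, (j.choose k : ℝ) * p ^ k * q ^ (j - k) ≤
        ∑ k ∈ Finset.Icc m j, (j.choose k : ℝ) * p ^ k * q ^ (j - k) := by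
    intro j
    have htot : ∑ k ∈ Finset.range (j + 1), (j.choose k : ℝ) * p ^ k * q ^ (j - k) = 1 := by
      have h := add_pow p q j
      rw [show p + q = 1 by ring, one_pow] at h
      rw [h]
      exact Finset.sum_congr rfl (fun k hk => by ring)
    have hsplit : ∑ k ∈ Finset.range m, (j.choose k : ℝ) * p ^ k * q ^ (j - k) +
        ∑ k ∈ Finset.Icc m j, (j.choose k : ℝ) * p ^ k * q ^ (j - k) =
        ∑ k ∈ Finset.range (max m (j + 1)), (j.choose k : ℝ) * p ^ k * q ^ (j - k) := by
      rw [← Finset.sum_union]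
      · congr 1
        ext x
        simp only [Finset.mem_union, Finset.mem_range, Finset.mem_Icc, lt_max_iff]
        omega
      · rw [Finset.disjoint_left]
        intro a ha hb
        simp only [Finset.mem_range] at ha
        simp only [Finset.mem_Icc] at hb
        omega
    have hext : ∑ k ∈ Finset.range (max m (j + 1)), (j.choose k : ℝ) * p ^ k * q ^ (j - k) =
        ∑ k ∈ Finset.range (j + 1), (j.choose k : ℝ) * p ^ k * q ^ (j - k) := by
      rw [← Finset.sum_subset (Finset.range_subset_range.2 (le_max_right m (j + 1)))]
      intro x hx hx'
      simp only [Finset.mem_range] at hx hx'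
      rw [Nat.choose_eq_zero_of_lt (by omega)]
      simp
    have hone : ∑ k ∈ Finset.range m, (j.choose k : ℝ) * p ^ k * q ^ (j - k) +
        ∑ k ∈ Finset.Icc m j, (j.choose k : ℝ) * p ^ k * q ^ (j - k) = 1 := by
      rw [hsplit, hext, htot]
    linarith
  have key : ((n : ℝ) + 1) - (m : ℝ) / p ≤
      ∑ j ∈ Finset.range (n + 1), ∑ k ∈ Finset.Icc m j,
        (j.choose k : ℝ) * p ^ k * q ^ (j - k) := by
    calc ((n : ℝ) + 1) - (m : ℝ) / p
        ≤ ∑ j ∈ Finset.range (n + 1),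
            (1 - ∑ k ∈ Finset.range m, (j.choose k : ℝ) * p ^ k * q ^ (j - k)) := by
          rw [Finset.sum_sub_distrib, Finset.sum_const, Finset.card_range]
          simp only [nsmul_eq_mul, mul_one]
          push_cast
          have hswap : ∑ j ∈ Finset.range (n + 1), ∑ k ∈ Finset.range m,
              (j.choose k : ℝ) * p ^ k * q ^ (j - k) =
              ∑ k ∈ Finset.range m, p ^ k *
                ∑ j ∈ Finset.range (n + 1), (j.choose k : ℝ) * q ^ (j - k) := by
            rw [Finset.sum_comm]
            refine Finset.sum_congr rfl fun k _ => ?_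
            rw [Finset.mul_sum]
            exact Finset.sum_congr rfl fun j _ => by ring
          rw [hswap]
          have hbd : ∑ k ∈ Finset.range m, p ^ k *
              ∑ j ∈ Finset.range (n + 1), (j.choose k : ℝ) * q ^ (j - k) ≤ (m : ℝ) / p := by
            calc ∑ k ∈ Finset.range m, p ^ k *
                ∑ j ∈ Finset.range (n + 1), (j.choose k : ℝ) * q ^ (j - k)
                ≤ ∑ k ∈ Finset.range m, p ^ k * (1 / p ^ (k + 1)) := by
                  apply Finset.sum_le_sum
                  intro k _
                  exact mul_le_mul_of_nonneg_left
                    (aux_geom_bound ⟨hq0, hq1⟩ k (n + 1)) (by positivity)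
              _ = ∑ k ∈ Finset.range m, 1 / p := by
                  refine Finset.sum_congr rfl fun k _ => ?_
                  rw [pow_succ]
                  field_simp
              _ = (m : ℝ) / p := by
                  rw [Finset.sum_const, Finset.card_range]
                  simp [div_eq_mul_inv]
          linarith
      _ ≤ _ := Finset.sum_le_sum fun j _ => inner_ge j
  have hn1 : (0 : ℝ) < (n : ℝ) + 1 := by positivity
  calc 1 - (1 / p) * ((m : ℝ) / ((n : ℝ) + 1))
      = ((n : ℝ) + 1)⁻¹ * (((n : ℝ) + 1) - (m : ℝ) / p) := by field_simp
    _ ≤ _ := mul_le_mul_of_nonneg_left key (by positivity)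
end

section
/- Let n ≥ 1, let α ∈ (0,1), and let Ĉ : ℝ^n → (subsets of ℝ) be any function such that Ĉ(0,0,…,0) is a bounded set. Then there exists a probability distribution P on ℝ supported on two points (hence with finite mean E_P[Y]) such that, for Y₁,…,Y_n i.i.d. with law P, ℙ( E_P[Y] ∈ Ĉ(Y₁,…,Y_n) ) < 1 − α. -/
open MeasureTheory

/-- Impossibility of covering the mean (Appendix B.3, following Bahadur–Savage): if
`Ĉ(0,…,0)` is a bounded set, then there is a two-point distribution `P` on `ℝ` such that,
for `Y₁,…,Y_n` i.i.d. with law `P`, the mean `E_P[Y]` is covered with probability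
less than `1 - α`. -/
theorem statement_18 {n : ℕ} (hn : 1 ≤ n) {α : ℝ} (hα : α ∈ Set.Ioo (0 : ℝ) 1)
    (C : (Fin n → ℝ) → Set ℝ) (hC : Bornology.IsBounded (C fun _ => 0)) :
    ∃ P : Measure ℝ, IsProbabilityMeasure P ∧
      (∃ u v : ℝ, P (({u, v} : Set ℝ)ᶜ) = 0) ∧
      (Measure.pi fun _ : Fin n => P) {ω | (∫ y, y ∂P) ∈ C ω} < ENNReal.ofReal (1 - α) := by
  obtain ⟨hα0, hα1⟩ := hα
  -- choose m outside C(0)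
  obtain ⟨R, hR⟩ := hC.subset_closedBall 0
  set m : ℝ := |R| + 1 with hm
  have hmC : m ∉ C (fun _ => 0) := by
    intro h
    have h2 := hR h
    rw [Metric.mem_closedBall, Real.dist_eq, sub_zero, hm,
      abs_of_pos (by positivity)] at h2
    linarith [le_abs_self R]
  -- set up a = b^(1/n), b = (1+α)/2
  set b : ℝ := (1 + α) / 2 with hb
  have hb0 : 0 < b := by positivity
  have hb1 : b < 1 := by rw [hb]; linarith
  have hbα : α < b := by rw [hb]; linarith
  set a : ℝ := b ^ ((n : ℝ)⁻¹) with ha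
  have ha0 : 0 < a := Real.rpow_pos_of_pos hb0 _
  have hn0 : (0:ℝ) < n := by exact_mod_cast hn
  have ha1 : a < 1 := by
    rw [ha]
    exact Real.rpow_lt_one hb0.le hb1 (by positivity)
  have hapow : a ^ n = b := by
    rw [ha, ← Real.rpow_natCast (b ^ ((n:ℝ)⁻¹)) n, ← Real.rpow_mul hb0.le,
      inv_mul_cancel₀ (ne_of_gt hn0), Real.rpow_one]
  set u : ℝ := m / (1 - a) with hu
  set P : Measure ℝ := ENNReal.ofReal a • Measure.dirac 0 + ENNReal.ofReal (1 - a) • Measure.dirac u with hP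
  have h1a : (0:ℝ) < 1 - a := by linarith
  have hPprob : IsProbabilityMeasure P := by
    constructor
    rw [hP]
    simp [Measure.add_apply, ← ENNReal.ofReal_add ha0.le h1a.le]
  have hint : (∫ y, y ∂P) = m := by
    have hi1 : Integrable (fun y : ℝ => y) (Measure.dirac 0) :=
      (integrable_const (0:ℝ)).congr (ae_eq_dirac (fun y : ℝ => y)).symm
    have hi2 : Integrable (fun y : ℝ => y) (Measure.dirac u) :=
      (integrable_const u).congr (ae_eq_dirac (fun y : ℝ => y)).symm
    rw [hP, integral_add_measure (hi1.smul_measure ENNReal.ofReal_ne_top)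
      (hi2.smul_measure ENNReal.ofReal_ne_top), integral_smul_measure, integral_smul_measure,
      integral_dirac, integral_dirac, ENNReal.toReal_ofReal ha0.le, ENNReal.toReal_ofReal h1a.le]
    simp [hu, smul_eq_mul]
    field_simp
  refine ⟨P, hPprob, ⟨0, u, ?_⟩, ?_⟩
  · rw [hP, Measure.coe_add, Pi.add_apply, Measure.smul_apply, Measure.smul_apply,
      Measure.dirac_apply, Measure.dirac_apply]
    simp [Set.indicator_apply]
  · -- the main bound
    have hsub : {ω : Fin n → ℝ | (∫ y, y ∂P) ∈ C ω} ⊆ (Set.pi Set.univ fun _ : Fin n => ({0} : Set ℝ))ᶜ := by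
      intro ω hω hω0
      have : ω = fun _ => 0 := funext fun i => hω0 i (Set.mem_univ i)
      rw [hint, this] at hω
      exact hmC hω
    have hpiprob : IsProbabilityMeasure (Measure.pi fun _ : Fin n => P) := by infer_instance
    have hzero : ENNReal.ofReal b ≤ (Measure.pi fun _ : Fin n => P) (Set.pi Set.univ fun _ : Fin n => ({0} : Set ℝ)) := by
      rw [Measure.pi_pi]
      have hP0 : ENNReal.ofReal a ≤ P {0} := by
        rw [hP, Measure.coe_add, Pi.add_apply, Measure.smul_apply, Measure.dirac_apply]
        simp [Set.indicator_apply]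
      calc ENNReal.ofReal b = ENNReal.ofReal a ^ n := by
            rw [← hapow, ENNReal.ofReal_pow ha0.le]
        _ ≤ ∏ _i : Fin n, P {0} := by
            rw [Finset.prod_const, Finset.card_univ, Fintype.card_fin]
            exact pow_le_pow_left' hP0 n
    calc (Measure.pi fun _ : Fin n => P) {ω | (∫ y, y ∂P) ∈ C ω}
        ≤ (Measure.pi fun _ : Fin n => P) (Set.pi Set.univ fun _ : Fin n => ({0} : Set ℝ))ᶜ :=
          measure_mono hsub
      _ = 1 - (Measure.pi fun _ : Fin n => P) (Set.pi Set.univ fun _ : Fin n => ({0} : Set ℝ)) := by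
          rw [measure_compl (MeasurableSet.univ_pi (fun _ => measurableSet_singleton 0)) (measure_ne_top _ _), measure_univ]
      _ ≤ 1 - ENNReal.ofReal b := tsub_le_tsub_left hzero 1
      _ < ENNReal.ofReal (1 - α) := by
          rw [← ENNReal.ofReal_one, ← ENNReal.ofReal_sub _ hb0.le]
          exact ENNReal.ofReal_lt_ofReal_iff (by linarith) |>.mpr (by linarith)
end
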